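/- arXiv:1803.04744 — 9 statements merged into one kernel-verified Lean document; each statement's English description precedes it below -/
import Mathlib

section
/- Let ‖·‖ be any norm on ℝ^m and let v⁽¹⁾,…,v⁽ᵗ⁾ ∈ ℝ^m be vectors with ‖v⁽ⁱ⁾‖ ≤ Δ for all i and v⁽¹⁾ + ⋯ + v⁽ᵗ⁾ = 0. Then there exists a permutation π of {1,…,t} such that for every j ∈ {1,…,t} the partial sum satisfies ‖Σ_{i=1}^{j} v⁽π(i)⁾‖ ≤ m·Δ. -/
open Finset

section Steinitz

variable {m t : ℕ}

/-- The invariant: coefficients `μ` on `S` lying in `[0,1]`, with prescribed total and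
vanishing weighted vector sum. -/
def SCond (v : Fin t → (Fin m → ℝ)) (S : Finset (Fin t)) (s : ℝ) (μ : Fin t → ℝ) : Prop :=
  (∀ i ∈ S, 0 ≤ μ i ∧ μ i ≤ 1) ∧ (∑ i ∈ S, μ i = s) ∧ (∑ i ∈ S, μ i • v i = 0)

open Classical in
/-- The set of fractional coordinates of `μ` on `S`. -/
noncomputable def fracSet (S : Finset (Fin t)) (μ : Fin t → ℝ) : Finset (Fin t) :=
  S.filter (fun i => μ i ≠ 0 ∧ μ i ≠ 1)

lemma mem_fracSet {S : Finset (Fin t)} {μ : Fin t → ℝ} {i : Fin t} :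
    i ∈ fracSet S μ ↔ i ∈ S ∧ (μ i ≠ 0 ∧ μ i ≠ 1) := by
  classical
  simp [fracSet, Finset.mem_filter]

lemma fracSet_subset (S : Finset (Fin t)) (μ : Fin t → ℝ) : fracSet S μ ⊆ S :=
  fun _ hi => (mem_fracSet.mp hi).1

variable {f : (Fin m → ℝ) → ℝ}

lemma f_zero (hhom : ∀ (c : ℝ) (x : Fin m → ℝ), f (c • x) = |c| * f x) : f 0 = 0 := by
  have := hhom 0 0
  simpa using this

lemma f_nonneg (hsub : ∀ x y : Fin m → ℝ, f (x + y) ≤ f x + f y)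
    (hhom : ∀ (c : ℝ) (x : Fin m → ℝ), f (c • x) = |c| * f x) (x : Fin m → ℝ) : 0 ≤ f x := by
  have h1 : f (x + (-1 : ℝ) • x) ≤ f x + f ((-1 : ℝ) • x) := hsub _ _
  have h2 : f ((-1 : ℝ) • x) = f x := by rw [hhom]; simp
  have h3 : x + (-1 : ℝ) • x = 0 := by simp
  rw [h3, f_zero hhom, h2] at h1
  linarith

lemma f_sum_le (hsub : ∀ x y : Fin m → ℝ, f (x + y) ≤ f x + f y)
    (hhom : ∀ (c : ℝ) (x : Fin m → ℝ), f (c • x) = |c| * f x)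
    {ι : Type*} (S : Finset ι) (g : ι → Fin m → ℝ) (b : ι → ℝ)
    (h : ∀ i ∈ S, f (g i) ≤ b i) : f (∑ i ∈ S, g i) ≤ ∑ i ∈ S, b i := by
  classical
  induction S using Finset.cons_induction with
  | empty => simp [f_zero hhom]
  | cons a s ha ih =>
    rw [Finset.sum_cons, Finset.sum_cons]
    calc f (g a + ∑ i ∈ s, g i) ≤ f (g a) + f (∑ i ∈ s, g i) := hsub _ _
      _ ≤ b a + ∑ i ∈ s, b i := by
          have := ih (fun i hi => h i (Finset.mem_cons_of_mem hi))
          have hba := h a (Finset.mem_cons_self a s)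
          linarith

variable {v : Fin t → (Fin m → ℝ)}

/-- Reduction of the fractional support to at most `m+1` coordinates. -/
lemma reduce (S : Finset (Fin t)) (s : ℝ) :
    ∀ N (μ : Fin t → ℝ), SCond v S s μ → (fracSet S μ).card ≤ N →
      ∃ μ', SCond v S s μ' ∧ (fracSet S μ').card ≤ m + 1 := by
  intro N
  induction N with
  | zero =>
    intro μ hc h0
    exact ⟨μ, hc, le_trans h0 (Nat.zero_le _)⟩
  | succ N ih =>
    intro μ hc hN
    by_cases hsmall : (fracSet S μ).card ≤ m + 1
    · exact ⟨μ, hc, hsmall⟩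
    push_neg at hsmall
    classical
    obtain ⟨hb, hs, hvs⟩ := hc
    have hFS : fracSet S μ ⊆ S := fracSet_subset S μ
    -- linear dependence of the fractional columns
    have hdep : ¬ LinearIndependent ℝ
        (fun i : {x // x ∈ fracSet S μ} => (Fin.cons 1 (v i.val) : Fin (m+1) → ℝ)) := by
      intro hLI
      have h1 := hLI.fintype_card_le_finrank
      rw [Module.finrank_fintype_fun_eq_card, Fintype.card_fin, Fintype.card_coe] at h1
      omega
    obtain ⟨g, hg0, i₁, hgi₁⟩ := Fintype.not_linearIndependent_iff.mp hdep
    set c : Fin t → ℝ := fun i => if h : i ∈ fracSet S μ then g ⟨i, h⟩ else 0 with hcdef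
    have hcsupp : ∀ i, c i ≠ 0 → i ∈ fracSet S μ := by
      intro i hi
      by_contra h
      exact hi (by simp [hcdef, h])
    have hcF : ∀ (i : Fin t) (h : i ∈ fracSet S μ), c i = g ⟨i, h⟩ := by
      intro i h
      simp [hcdef, h]
    have hFsum : ∑ i ∈ fracSet S μ, c i • (Fin.cons 1 (v i) : Fin (m+1) → ℝ) = 0 := by
      rw [← Finset.sum_coe_sort (fracSet S μ)
        (fun i => c i • (Fin.cons 1 (v i) : Fin (m+1) → ℝ)), ← hg0]
      apply Finset.sum_congr rfl
      intro x _
      rw [hcF x.val x.2]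
    have hSsum : ∑ i ∈ S, c i • (Fin.cons 1 (v i) : Fin (m+1) → ℝ) = 0 := by
      rw [← Finset.sum_subset hFS (fun x _ hx => ?_)]
      · exact hFsum
      · have : c x = 0 := by
          by_contra h
          exact hx (hcsupp x h)
        rw [this, zero_smul]
    have hcsum : ∑ i ∈ S, c i = 0 := by
      have h0 := congrFun hSsum 0
      simpa only [Finset.sum_apply, Pi.smul_apply, Fin.cons_zero, smul_eq_mul, mul_one,
        Pi.zero_apply] using h0
    have hcvsum : ∑ i ∈ S, c i • v i = 0 := by
      funext j
      have hj := congrFun hSsum j.succ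
      simpa only [Finset.sum_apply, Pi.smul_apply, Fin.cons_succ, Pi.zero_apply,
        smul_eq_mul] using hj
    -- fractional coordinates are strictly between 0 and 1
    have hfr' : ∀ i ∈ fracSet S μ, 0 < μ i ∧ μ i < 1 := by
      intro i hi
      have h1 := hb i (hFS hi)
      have h2 := (mem_fracSet.mp hi).2
      exact ⟨lt_of_le_of_ne h1.1 (Ne.symm h2.1), lt_of_le_of_ne h1.2 h2.2⟩
    -- choose the pivot
    set T := (fracSet S μ).filter (fun i => c i ≠ 0) with hT
    have hTne : T.Nonempty := by
      refine ⟨i₁.val, Finset.mem_filter.mpr ⟨i₁.2, ?_⟩⟩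
      rw [hcF i₁.val i₁.2]
      simpa using hgi₁
    set h' : Fin t → ℝ := fun i => if 0 < c i then (1 - μ i) / c i else μ i / (-c i) with hh'
    obtain ⟨i₀, hi₀T, hmin⟩ := T.exists_min_image h' hTne
    have hi₀F : i₀ ∈ fracSet S μ := (Finset.mem_filter.mp hi₀T).1
    have hi₀c : c i₀ ≠ 0 := (Finset.mem_filter.mp hi₀T).2
    have hε0 : 0 ≤ h' i₀ := by
      obtain ⟨h1, h2⟩ := hfr' i₀ hi₀F
      by_cases hc0 : 0 < c i₀
      · rw [hh']
        simp only [hc0, if_true]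
        exact div_nonneg (by linarith) hc0.le
      · have hneg : c i₀ < 0 := lt_of_le_of_ne (not_lt.mp hc0) hi₀c
        rw [hh']
        simp only [hc0, if_false]
        exact div_nonneg h1.le (by linarith)
    set ε := h' i₀ with hε
    set μ' : Fin t → ℝ := fun i => μ i + ε * c i with hμ'
    have hbound : ∀ i ∈ S, 0 ≤ μ' i ∧ μ' i ≤ 1 := by
      intro i hiS
      by_cases hc0 : c i = 0
      · have : μ' i = μ i := by simp [hμ', hc0]
        rw [this]
        exact hb i hiS
      · have hiF : i ∈ fracSet S μ := hcsupp i hc0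
        have hiT : i ∈ T := Finset.mem_filter.mpr ⟨hiF, hc0⟩
        have hεle : ε ≤ h' i := hmin i hiT
        obtain ⟨hf1, hf2⟩ := hfr' i hiF
        have hμ'i : μ' i = μ i + ε * c i := rfl
        rcases lt_or_gt_of_ne hc0 with hneg | hpos
        · have h1 : h' i = μ i / (-c i) := by
            rw [hh']; simp only [not_lt.mpr hneg.le, if_false]
          have h2 : h' i * c i = - μ i := by
            rw [h1, div_mul_eq_mul_div, div_neg, mul_div_assoc, div_self hc0, mul_one]
          have h3 : h' i * c i ≤ ε * c i := mul_le_mul_of_nonpos_right hεle hneg.le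
          have h4 : ε * c i ≤ 0 := mul_nonpos_of_nonneg_of_nonpos hε0 hneg.le
          rw [hμ'i]
          constructor <;> linarith
        · have h1 : h' i = (1 - μ i) / c i := by
            rw [hh']; simp only [hpos, if_true]
          have h2 : h' i * c i = 1 - μ i := by
            rw [h1]; field_simp
          have h3 : ε * c i ≤ h' i * c i := mul_le_mul_of_nonneg_right hεle hpos.le
          have h4 : 0 ≤ ε * c i := mul_nonneg hε0 hpos.le
          rw [hμ'i]
          constructor <;> linarith
    have hμ'i₀ : μ' i₀ = 0 ∨ μ' i₀ = 1 := by
      have hμ'e : μ' i₀ = μ i₀ + h' i₀ * c i₀ := rfl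
      rcases lt_or_gt_of_ne hi₀c with hneg | hpos
      · left
        have h1 : h' i₀ = μ i₀ / (-c i₀) := by
          rw [hh']; simp only [not_lt.mpr hneg.le, if_false]
        have h2 : h' i₀ * c i₀ = - μ i₀ := by
          rw [h1, div_mul_eq_mul_div, div_neg, mul_div_assoc, div_self hi₀c, mul_one]
        rw [hμ'e, h2]; ring
      · right
        have h1 : h' i₀ = (1 - μ i₀) / c i₀ := by
          rw [hh']; simp only [hpos, if_true]
        have h2 : h' i₀ * c i₀ = 1 - μ i₀ := by
          rw [h1]; field_simp
        rw [hμ'e, h2]; ring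
    have hcnd' : SCond v S s μ' := by
      refine ⟨hbound, ?_, ?_⟩
      · have : ∑ i ∈ S, μ' i = ∑ i ∈ S, μ i + ε * ∑ i ∈ S, c i := by
          rw [Finset.mul_sum, ← Finset.sum_add_distrib]
        rw [this, hcsum, mul_zero, add_zero, hs]
      · have : ∑ i ∈ S, μ' i • v i = ∑ i ∈ S, μ i • v i + ε • ∑ i ∈ S, c i • v i := by
          rw [Finset.smul_sum, ← Finset.sum_add_distrib]
          apply Finset.sum_congr rfl
          intro i _
          rw [show μ' i = μ i + ε * c i from rfl, add_smul, mul_smul]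
        rw [this, hcvsum, smul_zero, add_zero, hvs]
    have hsubset : fracSet S μ' ⊆ (fracSet S μ).erase i₀ := by
      intro i hi
      rw [mem_fracSet] at hi
      obtain ⟨hiS, hfr2⟩ := hi
      have hii₀ : i ≠ i₀ := by
        rintro rfl
        rcases hμ'i₀ with h | h
        · exact hfr2.1 h
        · exact hfr2.2 h
      refine Finset.mem_erase.mpr ⟨hii₀, ?_⟩
      by_cases hc0 : c i = 0
      · have heq : μ' i = μ i := by simp [hμ', hc0]
        rw [mem_fracSet]
        rw [heq] at hfr2
        exact ⟨hiS, hfr2⟩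
      · exact hcsupp i hc0
    have hcard' : (fracSet S μ').card ≤ N := by
      have h1 : ((fracSet S μ).erase i₀).card = (fracSet S μ).card - 1 :=
        Finset.card_erase_of_mem hi₀F
      have h2 := Finset.card_le_card hsubset
      omega
    exact ih μ' hcnd' hcard'

/-- Counting argument: a solution with small fractional support and total `|S|-1-m`
has a zero coordinate. -/
lemma exists_zero_coord (S : Finset (Fin t)) (μ : Fin t → ℝ)
    (hc : SCond v S ((S.card : ℝ) - 1 - m) μ) (hfr : (fracSet S μ).card ≤ m + 1) :
    ∃ i ∈ S, μ i = 0 := by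
  classical
  by_contra hcon
  push_neg at hcon
  obtain ⟨hb, hs, -⟩ := hc
  have hFS : fracSet S μ ⊆ S := fracSet_subset S μ
  have hone : ∀ i ∈ S \ fracSet S μ, μ i = 1 := by
    intro i hi
    rw [Finset.mem_sdiff, mem_fracSet] at hi
    obtain ⟨hiS, hni⟩ := hi
    by_contra hne
    exact hni ⟨hiS, hcon i hiS, hne⟩
  have hsplit : ∑ i ∈ S \ fracSet S μ, μ i + ∑ i ∈ fracSet S μ, μ i = ∑ i ∈ S, μ i :=
    Finset.sum_sdiff hFS
  have h1 : ∑ i ∈ S \ fracSet S μ, μ i = ((S \ fracSet S μ).card : ℝ) := by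
    rw [Finset.sum_congr rfl hone, Finset.sum_const, nsmul_eq_mul, mul_one]
  have hcardle : (fracSet S μ).card ≤ S.card := Finset.card_le_card hFS
  have h2 : ((S \ fracSet S μ).card : ℝ) = (S.card : ℝ) - (fracSet S μ).card := by
    rw [Finset.card_sdiff_of_subset hFS, Nat.cast_sub hcardle]
  have h3 : ∑ i ∈ fracSet S μ, μ i = ((fracSet S μ).card : ℝ) - 1 - m := by
    rw [hs, h1, h2] at hsplit
    linarith
  have h4 : ((fracSet S μ).card : ℝ) ≤ (m : ℝ) + 1 := by exact_mod_cast hfr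
  rcases Finset.eq_empty_or_nonempty (fracSet S μ) with he | hne
  · rw [he] at h3
    simp at h3
    have : (0:ℝ) ≤ m := Nat.cast_nonneg m
    linarith
  · have hpos : 0 < ∑ i ∈ fracSet S μ, μ i := by
      apply Finset.sum_pos _ hne
      intro i hi
      have hiS := hFS hi
      exact lt_of_le_of_ne (hb i hiS).1 (Ne.symm (hcon i hiS))
    linarith

/-- Descent step: from a witness on `S` we can delete an element keeping a witness. -/
lemma step (S : Finset (Fin t)) (hcard : m < S.card)
    (hw : ∃ μ, SCond v S ((S.card : ℝ) - m) μ) :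
    ∃ i ∈ S, ∃ μ, SCond v (S.erase i) (((S.erase i).card : ℝ) - m) μ := by
  classical
  obtain ⟨μ, hb, hs, hvs⟩ := hw
  have hkm : (m : ℝ) < (S.card : ℝ) := by exact_mod_cast hcard
  have hkm1 : (m : ℝ) + 1 ≤ (S.card : ℝ) := by exact_mod_cast hcard
  have hden : (0:ℝ) < (S.card : ℝ) - m := by linarith
  set r : ℝ := ((S.card : ℝ) - 1 - m) / ((S.card : ℝ) - m) with hr
  have hr0 : 0 ≤ r := div_nonneg (by linarith) hden.le
  have hr1 : r ≤ 1 := by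
    rw [hr, div_le_one hden]
    linarith
  have hcnd1 : SCond v S ((S.card : ℝ) - 1 - m) (fun i => r * μ i) := by
    refine ⟨?_, ?_, ?_⟩
    · intro i hi
      obtain ⟨h0, h1⟩ := hb i hi
      exact ⟨mul_nonneg hr0 h0, by show r * μ i ≤ 1; nlinarith⟩
    · rw [← Finset.mul_sum, hs, hr, div_mul_cancel₀ _ hden.ne']
    · simp only [mul_smul]
      rw [← Finset.smul_sum, hvs, smul_zero]
  obtain ⟨μ₂, hcnd2, hfr2⟩ := reduce S ((S.card : ℝ) - 1 - m) (fracSet S (fun i => r * μ i)).card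
    (fun i => r * μ i) hcnd1 le_rfl
  obtain ⟨i, hiS, hzero⟩ := exists_zero_coord S μ₂ hcnd2 hfr2
  obtain ⟨hb2, hs2, hvs2⟩ := hcnd2
  have hecard : ((S.erase i).card : ℝ) = (S.card : ℝ) - 1 := by
    rw [Finset.card_erase_of_mem hiS, Nat.cast_sub (by omega : 1 ≤ S.card)]
    norm_num
  refine ⟨i, hiS, μ₂, fun j hj => hb2 j (Finset.mem_of_mem_erase hj), ?_, ?_⟩
  · have := Finset.sum_erase_add S μ₂ hiS
    rw [hecard]
    rw [hzero, add_zero] at this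
    rw [this, hs2]
  · have := Finset.sum_erase_add S (fun j => μ₂ j • v j) hiS
    simp only [hzero, zero_smul, add_zero] at this
    rw [this, hvs2]

variable {Δ : ℝ}

lemma bound_of_witness (hsub : ∀ x y : Fin m → ℝ, f (x + y) ≤ f x + f y)
    (hhom : ∀ (c : ℝ) (x : Fin m → ℝ), f (c • x) = |c| * f x)
    (hv : ∀ i, f (v i) ≤ Δ) (S : Finset (Fin t)) (μ : Fin t → ℝ)
    (hc : SCond v S ((S.card : ℝ) - m) μ) : f (∑ i ∈ S, v i) ≤ m * Δ := by
  obtain ⟨hb, hs, hvs⟩ := hc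
  have key : ∑ i ∈ S, v i = ∑ i ∈ S, (1 - μ i) • v i := by
    have : ∑ i ∈ S, (1 - μ i) • v i = ∑ i ∈ S, v i - ∑ i ∈ S, μ i • v i := by
      rw [← Finset.sum_sub_distrib]
      apply Finset.sum_congr rfl
      intro i _
      rw [sub_smul, one_smul]
    rw [this, hvs, sub_zero]
  rw [key]
  have hΔ' : ∀ i ∈ S, f ((1 - μ i) • v i) ≤ (1 - μ i) * Δ := by
    intro i hi
    rw [hhom, abs_of_nonneg (by linarith [(hb i hi).2])]
    have h0 : 0 ≤ 1 - μ i := by linarith [(hb i hi).2]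
    have hfnn := f_nonneg hsub hhom (v i)
    nlinarith [hv i]
  calc f (∑ i ∈ S, (1 - μ i) • v i) ≤ ∑ i ∈ S, (1 - μ i) * Δ :=
        f_sum_le hsub hhom S _ _ hΔ'
    _ = m * Δ := by
        rw [← Finset.sum_mul]
        congr 1
        rw [Finset.sum_sub_distrib, Finset.sum_const, hs, nsmul_eq_mul, mul_one]
        ring

lemma bound_small (hsub : ∀ x y : Fin m → ℝ, f (x + y) ≤ f x + f y)
    (hhom : ∀ (c : ℝ) (x : Fin m → ℝ), f (c • x) = |c| * f x)
    (hΔ : 0 ≤ Δ) (hv : ∀ i, f (v i) ≤ Δ) (S : Finset (Fin t)) (hsm : S.card ≤ m) :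
    f (∑ i ∈ S, v i) ≤ m * Δ := by
  calc f (∑ i ∈ S, v i) ≤ ∑ _i ∈ S, Δ := f_sum_le hsub hhom S v _ (fun i _ => hv i)
    _ = S.card * Δ := by rw [Finset.sum_const, nsmul_eq_mul]
    _ ≤ m * Δ := by
        apply mul_le_mul_of_nonneg_right _ hΔ
        exact_mod_cast hsm

/-- Construction of the ordering by induction on the cardinality. -/
lemma chain (hsub : ∀ x y : Fin m → ℝ, f (x + y) ≤ f x + f y)
    (hhom : ∀ (c : ℝ) (x : Fin m → ℝ), f (c • x) = |c| * f x)
    (hΔ : 0 ≤ Δ) (hv : ∀ i, f (v i) ≤ Δ) :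
    ∀ n (S : Finset (Fin t)), S.card = n → (m < n → ∃ μ, SCond v S ((S.card : ℝ) - m) μ) →
    ∃ e : Fin n → Fin t, Function.Injective e ∧ (∀ i, e i ∈ S) ∧
      ∀ j : Fin n, f (∑ i ∈ Finset.Iic j, v (e i)) ≤ m * Δ := by
  intro n
  induction n with
  | zero =>
    intro S _ _
    exact ⟨Fin.elim0, fun a => a.elim0, fun i => i.elim0, fun j => j.elim0⟩
  | succ k ih =>
    intro S hS hw
    have hSne : S.Nonempty := Finset.card_pos.mp (by omega)
    have hmain : ∃ i₀ ∈ S,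
        (m < k → ∃ μ, SCond v (S.erase i₀) (((S.erase i₀).card : ℝ) - m) μ) ∧
        f (∑ i ∈ S, v i) ≤ m * Δ := by
      by_cases hm : m < k + 1
      · obtain ⟨μ, hμ⟩ := hw (by omega)
        obtain ⟨i₀, hi₀, hw'⟩ := step S (by omega) ⟨μ, hμ⟩
        exact ⟨i₀, hi₀, fun _ => hw', bound_of_witness hsub hhom hv S μ hμ⟩
      · obtain ⟨i₀, hi₀⟩ := hSne
        exact ⟨i₀, hi₀, fun h => absurd h (by omega),
          bound_small hsub hhom hΔ hv S (by omega)⟩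
    obtain ⟨i₀, hi₀, hw', hbS⟩ := hmain
    have hec : (S.erase i₀).card = k := by
      rw [Finset.card_erase_of_mem hi₀, hS]
      omega
    obtain ⟨e', hinj', hmem', hbd'⟩ := ih (S.erase i₀) hec hw'
    have hne' : ∀ a : Fin k, e' a ≠ i₀ := fun a => Finset.ne_of_mem_erase (hmem' a)
    have hmem : ∀ i : Fin (k+1), (Fin.snoc e' i₀ : Fin (k+1) → Fin t) i ∈ S := by
      intro i
      induction i using Fin.lastCases with
      | last => rw [Fin.snoc_last]; exact hi₀
      | cast j => rw [Fin.snoc_castSucc]; exact Finset.mem_of_mem_erase (hmem' j)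
    have hinj : Function.Injective (Fin.snoc e' i₀ : Fin (k+1) → Fin t) := by
      intro a b hab
      rcases Fin.eq_castSucc_or_eq_last a with ⟨a', rfl⟩ | rfl <;>
        rcases Fin.eq_castSucc_or_eq_last b with ⟨b', rfl⟩ | rfl
      · rw [Fin.snoc_castSucc, Fin.snoc_castSucc] at hab
        rw [hinj' hab]
      · rw [Fin.snoc_castSucc, Fin.snoc_last] at hab
        exact absurd hab (hne' a')
      · rw [Fin.snoc_castSucc, Fin.snoc_last] at hab
        exact absurd hab.symm (hne' b')
      · rfl
    refine ⟨Fin.snoc e' i₀, hinj, hmem, ?_⟩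
    intro j
    induction j using Fin.lastCases with
    | last =>
      have hIic : Finset.Iic (Fin.last k) = Finset.univ := by
        ext x; simp [Fin.le_last]
      have himg : Finset.image (Fin.snoc e' i₀ : Fin (k+1) → Fin t) Finset.univ = S := by
        apply Finset.eq_of_subset_of_card_le
        · intro x hx
          obtain ⟨i, _, rfl⟩ := Finset.mem_image.mp hx
          exact hmem i
        · rw [hS, Finset.card_image_of_injective _ hinj, Finset.card_univ, Fintype.card_fin]
      have hsum : ∑ i ∈ Finset.univ, v ((Fin.snoc e' i₀ : Fin (k+1) → Fin t) i) = ∑ x ∈ S, v x := by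
        rw [← himg, Finset.sum_image (fun x _ y _ h => hinj h)]
      rw [hIic, hsum]
      exact hbS
    | cast j' =>
      have hIic : Finset.Iic (Fin.castSucc j') = (Finset.Iic j').map Fin.castSuccEmb := by
        ext i
        simp only [Finset.mem_map, Finset.mem_Iic, Fin.castSuccEmb_apply]
        constructor
        · intro h
          have hi : i ≠ Fin.last k := by
            intro he; subst he
            exact lt_irrefl _ (h.trans_lt (Fin.castSucc_lt_last j'))
          refine ⟨i.castPred hi, ?_, Fin.castSucc_castPred i hi⟩
          rwa [← Fin.castSucc_le_castSucc_iff, Fin.castSucc_castPred]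
        · rintro ⟨a, ha, rfl⟩
          exact Fin.castSucc_le_castSucc_iff.mpr ha
      rw [hIic, Finset.sum_map]
      have hcong : ∀ x ∈ Finset.Iic j',
          v ((Fin.snoc e' i₀ : Fin (k+1) → Fin t) (Fin.castSuccEmb x)) = v (e' x) := by
        intro x _
        have h : (Fin.snoc e' i₀ : Fin (k+1) → Fin t) (Fin.castSuccEmb x) = e' x := by
          show (Fin.snoc e' i₀ : Fin (k+1) → Fin t) (Fin.castSucc x) = e' x
          simp
        rw [h]
      rw [Finset.sum_congr rfl hcong]
      exact hbd' j' 

end Steinitz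

/-- Steinitz Lemma (with Sevastyanov's bound `m·Δ`): for any norm `f` on `ℝ^m` and
vectors `v⁽¹⁾,…,v⁽ᵗ⁾` with `f(v⁽ⁱ⁾) ≤ Δ` summing to `0`, there is a permutation `π`
such that every partial sum of the reordered vectors has norm at most `m·Δ`. -/
theorem steinitz_lemma (m t : ℕ) (Δ : ℝ)
    (f : (Fin m → ℝ) → ℝ)
    (hsub : ∀ x y : Fin m → ℝ, f (x + y) ≤ f x + f y)
    (hhom : ∀ (c : ℝ) (x : Fin m → ℝ), f (c • x) = |c| * f x)
    (hdef : ∀ x : Fin m → ℝ, f x = 0 → x = 0)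
    (v : Fin t → (Fin m → ℝ))
    (hv : ∀ i, f (v i) ≤ Δ)
    (hsum : ∑ i, v i = 0) :
    ∃ π : Equiv.Perm (Fin t), ∀ j : Fin t,
      f (∑ i ∈ Finset.Iic j, v (π i)) ≤ m * Δ := by
  rcases Nat.eq_zero_or_pos t with ht | ht
  · subst ht
    exact ⟨Equiv.refl _, fun j => j.elim0⟩
  · have hΔ : 0 ≤ Δ := le_trans (f_nonneg hsub hhom (v ⟨0, ht⟩)) (hv ⟨0, ht⟩)
    have hcard : (Finset.univ : Finset (Fin t)).card = t := by simp
    have htR : (0 : ℝ) < t := by exact_mod_cast ht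
    have hwit : m < t →
        ∃ μ, SCond v Finset.univ (((Finset.univ : Finset (Fin t)).card : ℝ) - m) μ := by
      intro hmt
      have h2 : (m : ℝ) < t := by exact_mod_cast hmt
      refine ⟨fun _ => ((t : ℝ) - m) / t, fun i _ => ⟨div_nonneg (by linarith) htR.le, ?_⟩, ?_, ?_⟩
      · rw [div_le_one htR]
        have : (0:ℝ) ≤ m := Nat.cast_nonneg m
        linarith
      · rw [Finset.sum_const, hcard, nsmul_eq_mul, mul_div_assoc', mul_comm, mul_div_assoc,
          div_self htR.ne', mul_one]
      · rw [← Finset.smul_sum, show (∑ i ∈ Finset.univ, v i) = 0 from hsum, smul_zero]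
    obtain ⟨e, hinj, _, hbd⟩ := chain hsub hhom hΔ hv t Finset.univ hcard (fun h => hwit h)
    have hbij : Function.Bijective e :=
      (Fintype.bijective_iff_injective_and_card e).mpr ⟨hinj, by simp⟩
    exact ⟨Equiv.ofBijective e hbij, fun j => hbd j⟩
end

section
/- Let t > 0 be a real number and let A ∈ ℝ^{m×n} be a matrix in which the ℓ₁ norm of every column is at most t. Then herdisc(A) < t. -/
open Matrix Finset

/-- The hereditary discrepancy of a real matrix:
`herdisc A = max over column subsets I of min over z ∈ {0,1}^n of ‖A_I (z − 1/2)‖_∞`. -/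
noncomputable def herdisc {m n : ℕ} (A : Matrix (Fin m) (Fin n) ℝ) : ℝ :=
  Finset.univ.sup' Finset.univ_nonempty fun I : Finset (Fin n) =>
    Finset.univ.inf' Finset.univ_nonempty fun z : Fin n → Bool =>
      ‖(fun i : Fin m => ∑ j ∈ I, A i j * ((if z j then (1 : ℝ) else 0) - 1/2))‖

/-- There is a nonzero kernel vector when the codomain dimension is smaller. -/
lemma exists_kernel_vec {m n : ℕ} (A : Matrix (Fin m) (Fin n) ℝ)
    (F : Finset (Fin n)) (D : Finset (Fin m)) (hlt : D.card < F.card) :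
    ∃ u : {j // j ∈ F} → ℝ, u ≠ 0 ∧ ∀ i ∈ D, ∑ j : {j // j ∈ F}, A i j * u j = 0 := by
  classical
  let ψ : ({j // j ∈ F} → ℝ) →ₗ[ℝ] ({i // i ∈ D} → ℝ) :=
    { toFun := fun u i => ∑ j : {j // j ∈ F}, A i j * u j
      map_add' := by
        intro u v; funext i
        simp [mul_add, Finset.sum_add_distrib]
      map_smul' := by
        intro c u; funext i
        simp [Finset.mul_sum, mul_left_comm] }
  have hker : LinearMap.ker ψ ≠ ⊥ := by
    intro hbot
    have hinj : Function.Injective ψ := LinearMap.ker_eq_bot.mp hbot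
    have := LinearMap.finrank_le_finrank_of_injective hinj
    rw [Module.finrank_fintype_fun_eq_card, Module.finrank_fintype_fun_eq_card,
      Fintype.card_coe, Fintype.card_coe] at this
    omega
  obtain ⟨u, hu, hu0⟩ := (Submodule.ne_bot_iff _).mp hker
  refine ⟨u, hu0, fun i hi => ?_⟩
  have : ψ u = 0 := hu
  exact congrFun this ⟨i, hi⟩

lemma key_lemma {m n : ℕ} (A : Matrix (Fin m) (Fin n) ℝ) (t : ℝ) (ht : 0 < t)
    (hcol : ∀ j, ∑ i, |A i j| ≤ t) :
    ∀ N : ℕ, ∀ F : Finset (Fin n), F.card ≤ N → ∀ x : Fin n → ℝ,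
    (∀ j ∈ F, x j ∈ Set.Ioo (-(1/2) : ℝ) (1/2)) →
    ∃ y : Fin n → ℝ, (∀ j ∈ F, y j = 1/2 ∨ y j = -(1/2)) ∧ (∀ j, j ∉ F → y j = x j) ∧
      ∀ i, |∑ j ∈ F, A i j * (y j - x j)| < t := by
  classical
  intro N
  induction N with
  | zero =>
    intro F hF x _
    have : F = ∅ := Finset.card_eq_zero.mp (Nat.le_zero.mp hF)
    subst this
    exact ⟨x, by simp, by simp, fun i => by simpa using ht⟩
  | succ N ih =>
    intro F hF x hx
    rcases F.eq_empty_or_nonempty with rfl | hFne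
    · exact ⟨x, by simp, by simp, fun i => by simpa using ht⟩
    -- dangerous rows
    set D : Finset (Fin m) := Finset.univ.filter (fun i => t < ∑ j ∈ F, |A i j|) with hD
    have hDlt : D.card < F.card := by
      have h1 : t * D.card ≤ ∑ i ∈ D, ∑ j ∈ F, |A i j| := by
        calc t * D.card = ∑ _i ∈ D, t := by rw [Finset.sum_const]; ring
        _ ≤ ∑ i ∈ D, ∑ j ∈ F, |A i j| := by
            apply Finset.sum_le_sum
            intro i hi
            exact le_of_lt (Finset.mem_filter.mp hi).2
      have h2 : ∑ i ∈ D, ∑ j ∈ F, |A i j| ≤ ∑ i, ∑ j ∈ F, |A i j| := by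
        apply Finset.sum_le_sum_of_subset_of_nonneg (Finset.subset_univ D)
        intro i _ _
        positivity
      have h3 : ∑ i, ∑ j ∈ F, |A i j| ≤ t * F.card := by
        rw [Finset.sum_comm]
        calc ∑ j ∈ F, ∑ i, |A i j| ≤ ∑ _j ∈ F, t := Finset.sum_le_sum fun j _ => hcol j
        _ = t * F.card := by rw [Finset.sum_const]; ring
      have : t * D.card ≤ t * F.card := le_trans h1 (le_trans h2 h3)
      have hle : (D.card : ℝ) ≤ F.card := le_of_mul_le_mul_left this ht
      -- need strict
      by_cases hDe : D = ∅
      · rw [hDe]; simpa [Finset.card_pos] using hFne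
      · have hDne : D.Nonempty := Finset.nonempty_iff_ne_empty.mpr hDe
        have h1' : t * D.card < ∑ i ∈ D, ∑ j ∈ F, |A i j| := by
          calc t * D.card = ∑ _i ∈ D, t := by rw [Finset.sum_const]; ring
          _ < ∑ i ∈ D, ∑ j ∈ F, |A i j| := by
              apply Finset.sum_lt_sum_of_nonempty hDne
              intro i hi
              exact (Finset.mem_filter.mp hi).2
        have : t * D.card < t * F.card := lt_of_lt_of_le h1' (le_trans h2 h3)
        have := lt_of_mul_lt_mul_left this (le_of_lt ht)
        exact_mod_cast this
    obtain ⟨u, hu0, huker⟩ := exists_kernel_vec A F D hDlt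
    -- extend u to v on all of Fin n
    set v : Fin n → ℝ := fun j => if h : j ∈ F then u ⟨j, h⟩ else 0 with hv
    have hSne : (F.filter (fun j => v j ≠ 0)).Nonempty := by
      obtain ⟨j, hj⟩ := Function.ne_iff.mp hu0
      refine ⟨j.1, Finset.mem_filter.mpr ⟨j.2, ?_⟩⟩
      simpa [hv, j.2] using hj
    set S := F.filter (fun j => v j ≠ 0) with hS
    set c : Fin n → ℝ := fun j => if 0 < v j then (1/2 - x j) / v j else (-(1/2) - x j) / v j
      with hc
    have hcpos : ∀ j ∈ S, 0 < c j := by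
      intro j hj
      obtain ⟨hjF, hjv⟩ := Finset.mem_filter.mp hj
      obtain ⟨hx1, hx2⟩ := hx j hjF
      rcases lt_or_gt_of_ne hjv with hneg | hpos
      · simp only [hc, if_neg (not_lt.mpr (le_of_lt hneg))]
        apply div_pos_of_neg_of_neg <;> linarith
      · simp only [hc, if_pos hpos]
        apply div_pos <;> linarith
    set lam := S.inf' hSne c with hlam
    have hlampos : 0 < lam := (Finset.lt_inf'_iff hSne).mpr fun j hj => hcpos j hj
    set x' : Fin n → ℝ := fun j => x j + lam * v j with hx'
    -- x' stays in the closed box on F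
    have hbox : ∀ j ∈ F, -(1/2) ≤ x' j ∧ x' j ≤ 1/2 := by
      intro j hjF
      obtain ⟨hx1, hx2⟩ := hx j hjF
      rcases eq_or_ne (v j) 0 with hv0 | hv0
      · simp only [hx', hv0, mul_zero, add_zero]
        constructor <;> linarith
      · have hjS : j ∈ S := Finset.mem_filter.mpr ⟨hjF, hv0⟩
        have hl : lam ≤ c j := Finset.inf'_le c hjS
        rcases lt_or_gt_of_ne hv0 with hneg | hpos
        · have hcj : c j = (-(1/2) - x j) / v j := by
            simp [hc, not_lt.mpr (le_of_lt hneg)]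
          have : c j * v j = -(1/2) - x j := by
            rw [hcj, div_mul_cancel₀]; exact ne_of_lt hneg
          have hge : lam * v j ≥ c j * v j := mul_le_mul_of_nonpos_right hl (le_of_lt hneg)
          have hle' : lam * v j ≤ 0 := mul_nonpos_of_nonneg_of_nonpos (le_of_lt hlampos) (le_of_lt hneg)
          constructor
          · simp only [hx']; linarith
          · simp only [hx']; linarith
        · have hcj : c j = (1/2 - x j) / v j := by simp [hc, hpos]
          have : c j * v j = 1/2 - x j := by
            rw [hcj, div_mul_cancel₀]; exact ne_of_gt hpos
          have hle2 : lam * v j ≤ c j * v j := mul_le_mul_of_nonneg_right hl (le_of_lt hpos)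
          have hge' : 0 ≤ lam * v j := mul_nonneg (le_of_lt hlampos) (le_of_lt hpos)
          constructor
          · simp only [hx']; linarith
          · simp only [hx']; linarith
    -- some coordinate hits the boundary
    obtain ⟨j0, hj0S, hj0⟩ := Finset.exists_mem_eq_inf' hSne c
    have hj0F : j0 ∈ F := (Finset.mem_filter.mp hj0S).1
    have hj0v : v j0 ≠ 0 := (Finset.mem_filter.mp hj0S).2
    have hj0bd : x' j0 = 1/2 ∨ x' j0 = -(1/2) := by
      rcases lt_or_gt_of_ne hj0v with hneg | hpos
      · right
        have hcj : c j0 = (-(1/2) - x j0) / v j0 := by simp [hc, not_lt.mpr (le_of_lt hneg)]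
        simp only [hx', hlam, hj0, hcj, div_mul_cancel₀ _ (ne_of_lt hneg)]
        ring
      · left
        have hcj : c j0 = (1/2 - x j0) / v j0 := by simp [hc, hpos]
        simp only [hx', hlam, hj0, hcj, div_mul_cancel₀ _ (ne_of_gt hpos)]
        ring
    -- new floating set
    set F' := F.filter (fun j => x' j ≠ 1/2 ∧ x' j ≠ -(1/2)) with hF'
    have hF'sub : F' ⊆ F := Finset.filter_subset _ _
    have hj0notF' : j0 ∉ F' := by
      intro h
      obtain ⟨-, h2, h3⟩ := Finset.mem_filter.mp h
      rcases hj0bd with h1 | h1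
      · exact h2 h1
      · exact h3 h1
    have hcardlt : F'.card < F.card :=
      Finset.card_lt_card (Finset.ssubset_iff_of_subset hF'sub |>.mpr ⟨j0, hj0F, hj0notF'⟩)
    have hF'N : F'.card ≤ N := by omega
    have hx'F' : ∀ j ∈ F', x' j ∈ Set.Ioo (-(1/2) : ℝ) (1/2) := by
      intro j hj
      obtain ⟨hjF, hne1, hne2⟩ := Finset.mem_filter.mp hj
      obtain ⟨h1, h2⟩ := hbox j hjF
      exact ⟨lt_of_le_of_ne h1 (Ne.symm hne2), lt_of_le_of_ne h2 hne1⟩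
    obtain ⟨y, hy1, hy2, hy3⟩ := ih F' hF'N x' hx'F'
    -- y off F' equals x'
    have hyF : ∀ j ∈ F, y j = 1/2 ∨ y j = -(1/2) := by
      intro j hjF
      by_cases hjF' : j ∈ F'
      · exact hy1 j hjF'
      · have := hy2 j hjF'
        rw [this]
        by_contra hcon
        push_neg at hcon
        exact hjF' (Finset.mem_filter.mpr ⟨hjF, hcon.1, hcon.2⟩)
    refine ⟨y, hyF, ?_, ?_⟩
    · intro j hjF
      have hjF' : j ∉ F' := fun h => hjF (hF'sub h)
      rw [hy2 j hjF']
      simp only [hx', hv]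
      rw [dif_neg hjF]
      ring
    · intro i
      -- key decomposition; first, change on F equals change on F'
      have hstep : ∀ j ∈ F, j ∉ F' → y j - x' j = 0 := by
        intro j _ hjF'
        rw [hy2 j hjF']; ring
      have hsum1 : ∑ j ∈ F, A i j * (y j - x' j) = ∑ j ∈ F', A i j * (y j - x' j) := by
        symm
        apply Finset.sum_subset hF'sub
        intro j hj hj'
        rw [hstep j hj hj', mul_zero]
      by_cases hiD : i ∈ D
      · -- dangerous row: move along kernel contributes zero
        have hzero : ∑ j ∈ F, A i j * (x' j - x j) = 0 := by
          have : ∑ j ∈ F, A i j * (x' j - x j) = lam * ∑ j ∈ F, A i j * v j := by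
            rw [Finset.mul_sum]
            apply Finset.sum_congr rfl
            intro j _
            simp only [hx']
            ring
          rw [this]
          have hattach : ∑ j ∈ F, A i j * v j = ∑ j : {j // j ∈ F}, A i j.1 * u j := by
            rw [← Finset.sum_attach F (fun j => A i j * v j)]
            apply Finset.sum_congr rfl
            intro j _
            simp [hv, j.2]
          rw [hattach, huker i hiD, mul_zero]
        have hdecomp : ∑ j ∈ F, A i j * (y j - x j)
            = ∑ j ∈ F, A i j * (y j - x' j) + ∑ j ∈ F, A i j * (x' j - x j) := by
          rw [← Finset.sum_add_distrib]
          apply Finset.sum_congr rfl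
          intro j _
          ring
        rw [hdecomp, hzero, add_zero, hsum1]
        exact hy3 i
      · -- safe row
        have hsafe : ∑ j ∈ F, |A i j| ≤ t := by
          by_contra hcon
          exact hiD (Finset.mem_filter.mpr ⟨Finset.mem_univ i, lt_of_not_ge hcon⟩)
        calc |∑ j ∈ F, A i j * (y j - x j)| ≤ ∑ j ∈ F, |A i j * (y j - x j)| :=
              Finset.abs_sum_le_sum_abs _ _
        _ < t := by
            by_cases hall : ∀ j ∈ F, A i j = 0
            · have : ∑ j ∈ F, |A i j * (y j - x j)| = 0 := by
                apply Finset.sum_eq_zero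
                intro j hj
                rw [hall j hj]
                simp
              rw [this]; exact ht
            · push_neg at hall
              obtain ⟨j1, hj1F, hj1⟩ := hall
              have hterm : ∀ j ∈ F, |A i j * (y j - x j)| ≤ |A i j| := by
                intro j hjF
                rw [abs_mul]
                rcases eq_or_ne (A i j) 0 with h0 | h0
                · simp [h0]
                · have hd : |y j - x j| ≤ 1 := by
                    obtain ⟨hx1, hx2⟩ := hx j hjF
                    rcases hyF j hjF with hy | hy <;> rw [hy] <;> rw [abs_le] <;>
                      constructor <;> linarith
                  calc |A i j| * |y j - x j| ≤ |A i j| * 1 :=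
                        mul_le_mul_of_nonneg_left hd (abs_nonneg _)
                  _ = |A i j| := mul_one _
              have hstrict : |A i j1 * (y j1 - x j1)| < |A i j1| := by
                rw [abs_mul]
                have hd : |y j1 - x j1| < 1 := by
                  obtain ⟨hx1, hx2⟩ := hx j1 hj1F
                  rcases hyF j1 hj1F with hy | hy <;> rw [hy] <;> rw [abs_lt] <;>
                    constructor <;> linarith
                calc |A i j1| * |y j1 - x j1| < |A i j1| * 1 :=
                      mul_lt_mul_of_pos_left hd (abs_pos.mpr hj1)
                _ = |A i j1| := mul_one _
              calc ∑ j ∈ F, |A i j * (y j - x j)| < ∑ j ∈ F, |A i j| :=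
                    Finset.sum_lt_sum hterm ⟨j1, hj1F, hstrict⟩
              _ ≤ t := hsafe

/-- Beck–Fiala theorem (hereditary form): if the ℓ₁ norm of every column of
`A ∈ ℝ^{m×n}` is at most `t > 0`, then `herdisc A < t`. -/
theorem beck_fiala_herdisc {m n : ℕ} (A : Matrix (Fin m) (Fin n) ℝ) (t : ℝ)
    (ht : 0 < t) (hcol : ∀ j, ∑ i, |A i j| ≤ t) :
    herdisc A < t := by
  classical
  rw [herdisc, Finset.sup'_lt_iff]
  intro I _
  obtain ⟨y, hy1, hy2, hy3⟩ := key_lemma A t ht hcol I.card I le_rfl (fun _ => 0)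
    (by intro j _; constructor <;> norm_num)
  set z : Fin n → Bool := fun j => decide (y j = 1/2) with hz
  have hval : ∀ j ∈ I, ((if z j then (1:ℝ) else 0) - 1/2) = y j := by
    intro j hj
    rcases hy1 j hj with h | h
    · norm_num [hz, h]
    · norm_num [hz, h]
  apply lt_of_le_of_lt (Finset.inf'_le _ (Finset.mem_univ z))
  rw [pi_norm_lt_iff ht]
  intro i
  have := hy3 i
  simp only [sub_zero] at this
  rw [Real.norm_eq_abs]
  have heq : ∑ j ∈ I, A i j * ((if z j then (1:ℝ) else 0) - 1/2) = ∑ j ∈ I, A i j * y j := by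
    apply Finset.sum_congr rfl
    intro j hj
    rw [hval j hj]
  rw [heq]
  exact this
end

section
/- Let A ∈ ℝ^{m×n} be a matrix and let x ∈ ℤ^n with x ≥ 0 componentwise. Then there exists a vector z ∈ ℤ^n with 0 ≤ z_i ≤ x_i for all i and ‖A(z − x/2)‖_∞ ≤ herdisc(A). -/
open Matrix Finset

/-- Splitting lemma, first part: for every nonnegative integer vector `x` there is an
integer vector `z` with `0 ≤ z ≤ x` and `‖A(z − x/2)‖_∞ ≤ herdisc A`. -/
theorem split_lemma_first {m n : ℕ} (A : Matrix (Fin m) (Fin n) ℝ)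
    (x : Fin n → ℤ) (hx : 0 ≤ x) :
    ∃ z : Fin n → ℤ, (∀ i, 0 ≤ z i) ∧ (∀ i, z i ≤ x i) ∧
      ‖A.mulVec (fun i => (z i : ℝ) - (x i : ℝ) / 2)‖ ≤ herdisc A := by
  classical
  set I : Finset (Fin n) := Finset.univ.filter (fun j => x j % 2 = 1) with hI
  obtain ⟨z, -, hz⟩ := Finset.exists_mem_eq_inf' (Finset.univ_nonempty)
    (fun z : Fin n → Bool =>
      ‖(fun i : Fin m => ∑ j ∈ I, A i j * ((if z j then (1 : ℝ) else 0) - 1/2))‖)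
  have hbound : ‖(fun i : Fin m =>
      ∑ j ∈ I, A i j * ((if z j then (1 : ℝ) else 0) - 1/2))‖ ≤ herdisc A := by
    rw [← hz]
    exact Finset.le_sup' (f := fun I : Finset (Fin n) =>
      Finset.univ.inf' Finset.univ_nonempty fun z : Fin n → Bool =>
        ‖(fun i : Fin m => ∑ j ∈ I, A i j * ((if z j then (1 : ℝ) else 0) - 1/2))‖)
      (Finset.mem_univ I)
  refine ⟨fun j => x j / 2 + if z j ∧ x j % 2 = 1 then 1 else 0, ?_, ?_, ?_⟩
  · intro j
    have h0 : (0:ℤ) ≤ x j := hx j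
    dsimp only
    split_ifs <;> omega
  · intro j
    have h0 : (0:ℤ) ≤ x j := hx j
    dsimp only
    split_ifs <;> omega
  · have heq : A.mulVec (fun j => ((x j / 2 + if z j ∧ x j % 2 = 1 then 1 else 0 : ℤ) : ℝ)
        - (x j : ℝ) / 2)
      = fun i : Fin m => ∑ j ∈ I, A i j * ((if z j then (1 : ℝ) else 0) - 1/2) := by
      funext i
      simp only [mulVec, dotProduct, hI, Finset.sum_filter]
      refine Finset.sum_congr rfl fun j _ => ?_
      by_cases hmod : x j % 2 = 1
      · have h2 : (2:ℤ) * (x j / 2) = x j - 1 := by omega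
        have hc : ((x j / 2 : ℤ) : ℝ) = ((x j : ℝ) - 1) / 2 := by
          have := congrArg (Int.cast : ℤ → ℝ) h2
          push_cast at this; linarith
        simp only [hmod, and_true, if_true]
        push_cast [hc]
        rcases Bool.eq_false_or_eq_true (z j) with hb | hb <;> simp only [hb, if_true, if_false] <;> ring
      · have h2 : (2:ℤ) * (x j / 2) = x j := by omega
        have hc : ((x j / 2 : ℤ) : ℝ) = (x j : ℝ) / 2 := by
          have := congrArg (Int.cast : ℤ → ℝ) h2
          push_cast at this; linarith
        simp only [hmod, and_false, if_false]
        push_cast [hc]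
        ring
    rw [heq]
    exact hbound
end

section
/- Let A ∈ ℝ^{m×n} be a matrix and let x ∈ ℤ^n with x ≥ 0 componentwise and ‖x‖₁ > 1. Then there exists a vector z' ∈ ℤ^n with 0 ≤ z'_i ≤ x_i for all i, (1/6)·‖x‖₁ ≤ ‖z'‖₁ ≤ (5/6)·‖x‖₁, and ‖A(z' − x/2)‖_∞ ≤ 2·herdisc(A). -/
open Matrix Finset

lemma exists_f_le {m n : ℕ} (A : Matrix (Fin m) (Fin n) ℝ) (I : Finset (Fin n)) :
    ∃ w : Fin n → Bool,
      ‖(fun i : Fin m => ∑ j ∈ I, A i j * ((if w j then (1 : ℝ) else 0) - 1/2))‖ ≤ herdisc A := by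
  obtain ⟨w, -, hw⟩ := Finset.exists_mem_eq_inf' (Finset.univ_nonempty)
    (fun z : Fin n → Bool =>
      ‖(fun i : Fin m => ∑ j ∈ I, A i j * ((if z j then (1 : ℝ) else 0) - 1/2))‖)
  refine ⟨w, ?_⟩
  rw [← hw]
  exact Finset.le_sup' (fun I : Finset (Fin n) =>
    Finset.univ.inf' Finset.univ_nonempty fun z : Fin n → Bool =>
      ‖(fun i : Fin m => ∑ j ∈ I, A i j * ((if z j then (1 : ℝ) else 0) - 1/2))‖)
    (Finset.mem_univ I)

lemma compl_norm {m n : ℕ} (A : Matrix (Fin m) (Fin n) ℝ) (I : Finset (Fin n))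
    (w : Fin n → Bool) :
    ‖(fun i : Fin m => ∑ j ∈ I, A i j * ((if !w j then (1 : ℝ) else 0) - 1/2))‖
      = ‖(fun i : Fin m => ∑ j ∈ I, A i j * ((if w j then (1 : ℝ) else 0) - 1/2))‖ := by
  have h : (fun i : Fin m => ∑ j ∈ I, A i j * ((if !w j then (1 : ℝ) else 0) - 1/2))
      = -(fun i : Fin m => ∑ j ∈ I, A i j * ((if w j then (1 : ℝ) else 0) - 1/2)) := by
    funext i
    rw [Pi.neg_apply, ← Finset.sum_neg_distrib]
    refine Finset.sum_congr rfl fun j _ => ?_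
    cases hwj : w j <;> simp only [hwj, Bool.not_true, Bool.not_false, if_true, if_false, reduceIte] <;> norm_num
  rw [h, norm_neg]

lemma compl_card (I : Finset (Fin n)) (w : Fin n → Bool) :
    (I.filter fun j => w j = true).card + (I.filter fun j => (!w j) = true).card = I.card := by
  classical
  have : (I.filter fun j => (!w j) = true) = I.filter fun j => ¬ (w j = true) := by
    ext j; simp
  rw [this]
  exact Finset.card_filter_add_card_filter_not _

lemma exists_ge_half {m n : ℕ} (A : Matrix (Fin m) (Fin n) ℝ) (I : Finset (Fin n)) :
    ∃ w : Fin n → Bool,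
      ‖(fun i : Fin m => ∑ j ∈ I, A i j * ((if w j then (1 : ℝ) else 0) - 1/2))‖ ≤ herdisc A ∧
      I.card ≤ 2 * (I.filter fun j => w j = true).card := by
  obtain ⟨w, hw⟩ := exists_f_le A I
  have hc := compl_card I w
  by_cases h : I.card ≤ 2 * (I.filter fun j => w j = true).card
  · exact ⟨w, hw, h⟩
  · refine ⟨fun j => !w j, ?_, ?_⟩
    · rw [compl_norm]; exact hw
    · beta_reduce
      omega

lemma exists_le_half {m n : ℕ} (A : Matrix (Fin m) (Fin n) ℝ) (I : Finset (Fin n)) :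
    ∃ w : Fin n → Bool,
      ‖(fun i : Fin m => ∑ j ∈ I, A i j * ((if w j then (1 : ℝ) else 0) - 1/2))‖ ≤ herdisc A ∧
      2 * (I.filter fun j => w j = true).card ≤ I.card := by
  obtain ⟨w, hw⟩ := exists_f_le A I
  have hc := compl_card I w
  by_cases h : 2 * (I.filter fun j => w j = true).card ≤ I.card
  · exact ⟨w, hw, h⟩
  · refine ⟨fun j => !w j, ?_, ?_⟩
    · rw [compl_norm]; exact hw
    · beta_reduce
      omega

/-- Splitting lemma, second part: for every nonnegative integer vector `x` with
`‖x‖₁ > 1` there is an integer vector `z'` with `0 ≤ z' ≤ x`,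
`(1/6)‖x‖₁ ≤ ‖z'‖₁ ≤ (5/6)‖x‖₁` and `‖A(z' − x/2)‖_∞ ≤ 2·herdisc A`. -/
theorem split_lemma_second {m n : ℕ} (A : Matrix (Fin m) (Fin n) ℝ)
    (x : Fin n → ℤ) (hx : 0 ≤ x) (hx1 : 1 < ∑ i, |x i|) :
    ∃ z : Fin n → ℤ, (∀ i, 0 ≤ z i) ∧ (∀ i, z i ≤ x i) ∧
      (1 / 6 : ℝ) * ((∑ i, |x i| : ℤ) : ℝ) ≤ ((∑ i, |z i| : ℤ) : ℝ) ∧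
      ((∑ i, |z i| : ℤ) : ℝ) ≤ (5 / 6 : ℝ) * ((∑ i, |x i| : ℤ) : ℝ) ∧
      ‖A.mulVec (fun i => (z i : ℝ) - (x i : ℝ) / 2)‖ ≤ 2 * herdisc A := by
  classical
  have hxnn : ∀ i, 0 ≤ x i := fun i => hx i
  have habs : ∀ i, |x i| = x i := fun i => abs_of_nonneg (hxnn i)
  have hs : ∑ i, |x i| = ∑ i, x i := Finset.sum_congr rfl fun i _ => habs i
  set I : Finset (Fin n) := Finset.univ.filter (fun j => x j % 2 = 1) with hIdef
  set k := I.card with hk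
  have hk1 : (k + 1) / 2 ≤ k := by omega
  obtain ⟨I₁, hI₁sub, hI₁card⟩ := Finset.exists_subset_card_eq hk1
  set I₂ := I \ I₁ with hI₂def
  have hI₂card : I₂.card = k - (k + 1) / 2 := by
    rw [hI₂def, Finset.card_sdiff_of_subset hI₁sub, hI₁card]
  obtain ⟨w₁, hw₁n, hw₁c⟩ := exists_ge_half A I₁
  obtain ⟨w₂, hw₂n, hw₂c⟩ := exists_le_half A I₂
  set z : Fin n → ℤ := fun j => x j / 2 + (if j ∈ I₁ ∧ w₁ j = true then 1 else 0)
      + (if j ∈ I₂ ∧ w₂ j = true then 1 else 0) with hzdef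
  have hznn : ∀ j, 0 ≤ z j := by
    intro j
    have h1 : 0 ≤ x j / 2 := Int.ediv_nonneg (hxnn j) (by norm_num)
    simp only [hzdef]
    split_ifs <;> omega
  have hdisj : ∀ j, j ∈ I₁ → j ∉ I₂ := by
    intro j hj1 hj2
    exact (Finset.mem_sdiff.mp hj2).2 hj1
  have hmod : ∀ j, j ∈ I₁ ∨ j ∈ I₂ → x j % 2 = 1 := by
    intro j hj
    rcases hj with h | h
    · exact (Finset.mem_filter.mp (hI₁sub h)).2
    · exact (Finset.mem_filter.mp (Finset.mem_sdiff.mp h).1).2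
  have hmod0 : ∀ j, j ∉ I₁ → j ∉ I₂ → x j % 2 = 0 := by
    intro j h1 h2
    by_contra h
    have hj : j ∈ I := Finset.mem_filter.mpr ⟨Finset.mem_univ j, by omega⟩
    exact h2 (Finset.mem_sdiff.mpr ⟨hj, h1⟩)
  have hzle : ∀ j, z j ≤ x j := by
    intro j
    have h2 : 2 * (x j / 2) + x j % 2 = x j := Int.mul_ediv_add_emod (x j) 2
    have h1 : 0 ≤ x j / 2 := Int.ediv_nonneg (hxnn j) (by norm_num)
    simp only [hzdef]
    by_cases hj1 : j ∈ I₁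
    · have hm := hmod j (Or.inl hj1)
      have hj2 := hdisj j hj1
      rw [if_neg (show ¬(j ∈ I₂ ∧ w₂ j = true) from fun hcon => hj2 hcon.1)]
      split_ifs <;> omega
    · by_cases hj2 : j ∈ I₂
      · have hm := hmod j (Or.inr hj2)
        rw [if_neg (show ¬(j ∈ I₁ ∧ w₁ j = true) from fun hcon => hj1 hcon.1)]
        split_ifs <;> omega
      · have hm := hmod0 j hj1 hj2
        rw [if_neg (show ¬(j ∈ I₁ ∧ w₁ j = true) from fun hcon => hj1 hcon.1), if_neg (show ¬(j ∈ I₂ ∧ w₂ j = true) from fun hcon => hj2 hcon.1)]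
        omega
  -- sum identities
  set Y : ℤ := ∑ j, x j / 2 with hY
  have hYnn : 0 ≤ Y := Finset.sum_nonneg fun j _ => Int.ediv_nonneg (hxnn j) (by norm_num)
  have hmod01 : ∀ j, x j % 2 = if x j % 2 = 1 then (1 : ℤ) else 0 := by
    intro j
    have := hxnn j
    omega
  have hsumk : ∑ j, x j % 2 = (k : ℤ) := by
    rw [hk, hIdef, Finset.sum_congr rfl fun j _ => hmod01 j, Finset.sum_boole]
  have h2sum : 2 * Y + (k : ℤ) = ∑ i, x i := by
    rw [hY, ← hsumk, Finset.mul_sum, ← Finset.sum_add_distrib]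
    exact Finset.sum_congr rfl fun j _ => Int.mul_ediv_add_emod (x j) 2
  set c₁ := (I₁.filter fun j => w₁ j = true).card with hc₁
  set c₂ := (I₂.filter fun j => w₂ j = true).card with hc₂
  have hc₁le : c₁ ≤ I₁.card := Finset.card_filter_le _ _
  have hc₂le : c₂ ≤ I₂.card := Finset.card_filter_le _ _
  have e₁ : ∑ j, (if j ∈ I₁ ∧ w₁ j = true then (1 : ℤ) else 0) = (c₁ : ℤ) := by
    rw [Finset.sum_boole]
    norm_cast
    rw [hc₁]
    congr 1
    ext j
    simp
  have e₂ : ∑ j, (if j ∈ I₂ ∧ w₂ j = true then (1 : ℤ) else 0) = (c₂ : ℤ) := by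
    rw [Finset.sum_boole]
    norm_cast
    rw [hc₂]
    congr 1
    ext j
    simp
  have hsumz : ∑ j, z j = Y + (c₁ : ℤ) + (c₂ : ℤ) := by
    simp only [hzdef]
    rw [Finset.sum_add_distrib, Finset.sum_add_distrib, e₁, e₂, hY]
  have hzabs : ∑ i, |z i| = ∑ i, z i := Finset.sum_congr rfl fun i _ => abs_of_nonneg (hznn i)
  have hs2 : (2 : ℤ) ≤ ∑ i, x i := by rw [← hs]; omega
  have hlow : (∑ i, x i) ≤ 6 * ∑ j, z j := by
    rw [hsumz]
    have h1 : I₁.card ≤ 2 * c₁ := hw₁c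
    clear_value k Y c₁ c₂
    omega
  have hhigh : 6 * (∑ j, z j) ≤ 5 * ∑ i, x i := by
    rw [hsumz]
    have h2 : 2 * c₂ ≤ I₂.card := hw₂c
    clear_value k Y c₁ c₂
    omega
  refine ⟨z, hznn, hzle, ?_, ?_, ?_⟩
  · rw [hs, hzabs]
    have h' : ((∑ i, x i : ℤ) : ℝ) ≤ 6 * ((∑ j, z j : ℤ) : ℝ) := by exact_mod_cast hlow
    linarith
  · rw [hs, hzabs]
    have h' : 6 * ((∑ j, z j : ℤ) : ℝ) ≤ 5 * ((∑ i, x i : ℤ) : ℝ) := by exact_mod_cast hhigh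
    linarith
  · have key : A.mulVec (fun j => (z j : ℝ) - (x j : ℝ) / 2)
        = (fun i : Fin m => ∑ j ∈ I₁, A i j * ((if w₁ j then (1 : ℝ) else 0) - 1/2))
        + (fun i : Fin m => ∑ j ∈ I₂, A i j * ((if w₂ j then (1 : ℝ) else 0) - 1/2)) := by
      funext i
      simp only [Matrix.mulVec, dotProduct, Pi.add_apply]
      have h1 : ∑ j ∈ I₁, A i j * ((if w₁ j then (1 : ℝ) else 0) - 1/2)
          = ∑ j, (if j ∈ I₁ then A i j * ((if w₁ j then (1 : ℝ) else 0) - 1/2) else 0) := by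
        rw [Finset.sum_ite_mem, Finset.univ_inter]
      have h2 : ∑ j ∈ I₂, A i j * ((if w₂ j then (1 : ℝ) else 0) - 1/2)
          = ∑ j, (if j ∈ I₂ then A i j * ((if w₂ j then (1 : ℝ) else 0) - 1/2) else 0) := by
        rw [Finset.sum_ite_mem, Finset.univ_inter]
      rw [h1, h2, ← Finset.sum_add_distrib]
      refine Finset.sum_congr rfl fun j _ => ?_
      simp only [hzdef]
      by_cases hj1 : j ∈ I₁
      · have hm := hmod j (Or.inl hj1)
        have hj2 := hdisj j hj1
        have h2' : 2 * (x j / 2) + 1 = x j := by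
          have := Int.mul_ediv_add_emod (x j) 2
          omega
        have hxr : (x j : ℝ) = 2 * ((x j / 2 : ℤ) : ℝ) + 1 := by exact_mod_cast h2'.symm
        simp only [hj1, hj2, true_and, false_and, if_false, if_true, if_pos, if_neg,
          not_false_iff, add_zero]
        split_ifs <;> push_cast <;> rw [hxr] <;> ring
      · by_cases hj2 : j ∈ I₂
        · have hm := hmod j (Or.inr hj2)
          have h2' : 2 * (x j / 2) + 1 = x j := by
            have := Int.mul_ediv_add_emod (x j) 2
            omega
          have hxr : (x j : ℝ) = 2 * ((x j / 2 : ℤ) : ℝ) + 1 := by exact_mod_cast h2'.symm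
          simp only [hj1, hj2, true_and, false_and, if_false, if_true, if_pos, if_neg,
            not_false_iff, zero_add]
          split_ifs <;> push_cast <;> rw [hxr] <;> ring
        · have hm := hmod0 j hj1 hj2
          have h2' : 2 * (x j / 2) = x j := by
            have := Int.mul_ediv_add_emod (x j) 2
            omega
          have hxr : (x j : ℝ) = 2 * ((x j / 2 : ℤ) : ℝ) := by exact_mod_cast h2'.symm
          simp only [hj1, hj2, false_and, if_false, add_zero]
          push_cast
          rw [hxr]
          ring
    rw [key]
    calc ‖_ + _‖ ≤ _ + _ := norm_add_le _ _
    _ ≤ 2 * herdisc A := by linarith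
end

section
/- Let A ∈ ℤ^{m×n} with all entries of absolute value at most Δ, b ∈ ℤ^m, c ∈ ℤ^n. Suppose the set S = {x ∈ ℤ^n : Ax = b, x ≥ 0} is nonempty and the set of objective values {cᵀx : x ∈ S} is bounded above. Then there exists x* ∈ S with cᵀx* ≥ cᵀx for all x ∈ S and ‖x*‖₁ ≤ n²·(m·(Δ + ‖b‖_∞))^{2m+1}. -/
/-!
Among the optimal solutions pick `x` of least coordinate sum and, among those, of largest
`x ⬝ᵥ x`. Then no nonzero integer kernel vector `d` of `A` satisfies `|d| ≤ x`: both `x ± d`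
would again be optimal with the same coordinate sum, while
`(x + d) ⬝ᵥ (x + d) + (x - d) ⬝ᵥ (x - d) = 2 (x ⬝ᵥ x) + 2 (d ⬝ᵥ d)`.

Hence the columns of `A` on which `x` exceeds `H = m! Δ^(m-1) Δ` are linearly independent: a
dependency among them would give, by Cramer's rule applied to a square completion of an
independent subfamily by unit vectors, a kernel vector with entries at most `H`. So at most `m`
coordinates exceed `H`, and they solve a nonsingular system whose right-hand side
`b - (contribution of the other coordinates)` is bounded by `‖b‖_∞ + n Δ H`; Cramer's rule bounds
them by `m! Δ^(m-1) (‖b‖_∞ + n Δ H)`, and summing gives the claim.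
-/

open Matrix Finset
open scoped Nat

theorem LinearIndependent.exists_basis_sumElim {ι κ K V : Type*} [DivisionRing K]
    [AddCommGroup V] [Module K V] {v : ι → V} (hv : LinearIndependent K v)
    (e : Module.Basis κ K V) :
    ∃ (T : Set κ) (B : Module.Basis (ι ⊕ T) K V), ⇑B = Sum.elim v (e ∘ (↑)) := by
  have hinl : LinearIndepOn K (Sum.elim v e) (Set.range Sum.inl) :=
    (linearIndepOn_range_iff Sum.inl_injective _).2 (by simpa using hv)
  obtain ⟨b, -, hsb, hspan, hb⟩ := exists_linearIndepOn_extension hinl (Set.subset_univ _)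
  set T : Set κ := {k | Sum.inr k ∈ b}
  have hrange : Set.range (Sum.map id ((↑) : T → κ)) = b := by
    ext (j | k)
    · simpa using hsb ⟨j, rfl⟩
    · simp [T]
  have hli : LinearIndependent K (Sum.elim v (e ∘ (↑)) : ι ⊕ T → V) := by
    have := (linearIndepOn_range_iff
      (Sum.map_injective.2 ⟨Function.injective_id, Subtype.val_injective⟩) _).1 (hrange ▸ hb)
    rwa [Sum.elim_comp_map] at this
  refine ⟨T, .mk hli ?_, Module.Basis.coe_mk _ _⟩
  rw [← e.span_eq, Submodule.span_le]
  rintro _ ⟨k, rfl⟩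
  have := hspan ⟨Sum.inr k, trivial, rfl⟩
  rwa [← hrange, ← Set.range_comp, Sum.elim_comp_map] at this

theorem Matrix.intCast_comp_mulVec {κ ι R : Type*} [Fintype ι] [Ring R] (A : Matrix κ ι ℤ)
    (w : ι → ℤ) : Int.cast ∘ (A *ᵥ w) = A.map (Int.cast : ℤ → R) *ᵥ (Int.cast ∘ w) :=
  funext ((Int.castRingHom R).map_mulVec A w)

theorem Matrix.abs_mulVec_le {κ ι R : Type*} [Fintype ι] [CommRing R] [LinearOrder R]
    [IsStrictOrderedRing R] {A : Matrix κ ι R} {w : ι → R} {Δ W : R} (hA : ∀ i j, |A i j| ≤ Δ)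
    (hw : ∀ j, |w j| ≤ W) (i : κ) : |(A *ᵥ w) i| ≤ Fintype.card ι * (Δ * W) :=
  calc |∑ j, A i j * w j| ≤ ∑ j, |A i j * w j| := abs_sum_le_sum_abs _ _
    _ ≤ ∑ _j : ι, Δ * W := by
      gcongr with j
      rw [abs_mul]
      exact mul_le_mul (hA i j) (hw j) (abs_nonneg _) ((abs_nonneg _).trans (hA i j))
    _ = Fintype.card ι * (Δ * W) := by simp

theorem RingHom.comp_cramer_of_mulVec_eq {n R S : Type*} [Fintype n] [DecidableEq n] [CommRing R]
    [CommRing S] (f : R →+* S) (M : Matrix n n R) (u : n → R) {v : n → S}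
    (hv : M.map f *ᵥ v = f ∘ u) : f ∘ M.cramer u = f M.det • v := by
  have hu : f ∘ u = M.map f *ᵥ v := hv.symm
  funext k
  rw [Function.comp_apply, cramer_eq_adjugate_mulVec, RingHom.map_mulVec, ← RingHom.mapMatrix_apply,
    RingHom.map_adjugate, RingHom.mapMatrix_apply, hu, mulVec_mulVec, adjugate_mul,
    RingHom.map_det, RingHom.mapMatrix_apply, smul_mulVec, one_mulVec]

theorem Matrix.det_le_factorial_smul_prod {n R S : Type*} [Fintype n] [DecidableEq n] [CommRing R]
    [Nontrivial R] [CommRing S] [LinearOrder S] [IsStrictOrderedRing S] {A : Matrix n n R}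
    {abv : AbsoluteValue R S} {x : n → S} (hx : ∀ i j, abv (A i j) ≤ x j) :
    abv A.det ≤ (Fintype.card n)! • ∏ j, x j := by
  rw [det_apply]
  calc abv (∑ σ : Equiv.Perm n, Equiv.Perm.sign σ • ∏ i, A (σ i) i)
      ≤ ∑ σ : Equiv.Perm n, abv (Equiv.Perm.sign σ • ∏ i, A (σ i) i) := abv.sum_le _ _
    _ = ∑ σ : Equiv.Perm n, ∏ i, abv (A (σ i) i) := by
      simp only [abv.map_units_int_smul, abv.map_prod]
    _ ≤ ∑ _σ : Equiv.Perm n, ∏ j, x j := by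
      gcongr with σ _ i
      exact hx _ _
    _ = _ := by simp [Fintype.card_perm]

theorem Matrix.abs_cramer_le {n R : Type*} [Fintype n] [DecidableEq n] [CommRing R] [LinearOrder R]
    [IsStrictOrderedRing R] {M : Matrix n n R} {u : n → R} {Δ U : R} (hM : ∀ i j, |M i j| ≤ Δ)
    (hu : ∀ i, |u i| ≤ U) (k : n) :
    |M.cramer u k| ≤ (Fintype.card n)! * Δ ^ (Fintype.card n - 1) * U := by
  have hcol : ∀ i j, |M.updateCol k u i j| ≤ Function.update (fun _ => Δ) k U j := by
    intro i j
    rcases eq_or_ne j k with rfl | hj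
    · simpa using hu i
    · simpa [hj] using hM i j
  have := det_le_factorial_smul_prod (abv := AbsoluteValue.abs) hcol
  rw [cramer_apply]
  convert this using 1
  · rfl
  rw [Finset.prod_update_of_mem (mem_univ k), prod_const, nsmul_eq_mul]
  simp only [card_sdiff, card_univ, inter_univ, card_singleton]
  ring

/-- Bound on the determinant of an `m × m` integer matrix whose entries have absolute value at
most `Δ`, except in one column where they are at most `U`. -/
def cramerBound (m Δ U : ℕ) : ℕ := m ! * Δ ^ (m - 1) * U

def Matrix.unitCompletion {m : ℕ} {ι R : Type*} [Zero R] [One R] (A : Matrix (Fin m) ι R)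
    (s : Set ι) (T : Set (Fin m)) : Matrix (Fin m) (s ⊕ T) R :=
  fromCols (A.submatrix id (↑)) ((1 : Matrix (Fin m) (Fin m) R).submatrix id (↑))

theorem Matrix.abs_unitCompletion_le {m : ℕ} {ι : Type*} {A : Matrix (Fin m) ι ℤ} {Δ : ℕ}
    (hΔ : ∀ i j, |A i j| ≤ Δ) (hΔ1 : 1 ≤ Δ) (s : Set ι) (T : Set (Fin m)) (i : Fin m) (c : s ⊕ T) :
    |A.unitCompletion s T i c| ≤ Δ := by
  rcases c with a | t
  · exact hΔ i a
  · simp only [unitCompletion, fromCols_apply_inr, submatrix_apply, one_apply]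
    split_ifs <;> simp [hΔ1]

theorem Matrix.exists_mulVec_eq_col_of_not_linearIndepOn {κ ι K : Type*} [Fintype ι] [Field K]
    (A : Matrix κ ι K) {s : Set ι} (hs : ¬ LinearIndepOn K A.col s) :
    ∃ I ⊆ s, LinearIndepOn K A.col I ∧ ∃ t ∈ s, t ∉ I ∧
      ∃ y : ι → K, (∀ j ∉ I, y j = 0) ∧ A *ᵥ y = A.col t := by
  obtain ⟨I, hIs, -, hspan, hI⟩ :=
    exists_linearIndepOn_extension (linearIndepOn_empty K A.col) (Set.empty_subset s)
  obtain ⟨t, hts, htI⟩ : ∃ t ∈ s, t ∉ I := by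
    by_contra! h
    exact hs (hI.mono h)
  obtain ⟨l, hlI, hl⟩ := Finsupp.mem_span_image_iff_linearCombination K |>.1 (hspan ⟨t, hts, rfl⟩)
  refine ⟨I, hIs, hI, t, hts, htI, l, (Finsupp.mem_supported' K l).1 hlI, ?_⟩
  rw [← hl, Finsupp.linearCombination_apply, Finsupp.sum_fintype _ _ (by simp)]
  ext i
  simp [mulVec, dotProduct, Finset.sum_apply, mul_comm]

section CramerBounds

variable {m : ℕ} {ι : Type*} [Fintype ι]

theorem exists_det_unitCompletion_ne_zero (A : Matrix (Fin m) ι ℤ) {s : Set ι}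
    (hs : LinearIndepOn ℚ (A.map (Int.cast : ℤ → ℚ)).col s) :
    ∃ (T : Set (Fin m)) (σ : s ⊕ T ≃ Fin m),
      ((A.unitCompletion s T).submatrix id σ.symm).det ≠ 0 := by
  classical
  obtain ⟨T, B, hB⟩ := hs.linearIndependent.exists_basis_sumElim (Pi.basisFun ℚ (Fin m))
  have hcard : Fintype.card (s ⊕ T) = m := by simpa using (Module.finrank_eq_card_basis B).symm
  set σ := Fintype.equivFinOfCardEq hcard
  set M := (A.unitCompletion s T).submatrix id σ.symm
  have hB' : ((A.unitCompletion s T).map (Int.cast : ℤ → ℚ)).col = B := by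
    rw [hB]
    funext c i
    rcases c with a | t <;> simp [unitCompletion, Pi.single_apply, one_apply]
  have hunit : IsUnit (M.map (Int.cast : ℤ → ℚ)) := by
    rw [← linearIndependent_cols_iff_isUnit]
    have := B.linearIndependent.comp σ.symm σ.symm.injective
    rwa [← hB'] at this
  have hcast : (M.map (Int.cast : ℤ → ℚ)).det = M.det := ((Int.castRingHom ℚ).map_det M).symm
  rw [isUnit_iff_isUnit_det, hcast] at hunit
  exact ⟨T, σ, by exact_mod_cast hunit.ne_zero⟩

theorem exists_denominator_of_mulVec_eq (A : Matrix (Fin m) ι ℤ) {Δ : ℕ} (hΔ : ∀ i j, |A i j| ≤ Δ)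
    (hΔ1 : 1 ≤ Δ) {s : Set ι} (hs : LinearIndepOn ℚ (A.map (Int.cast : ℤ → ℚ)).col s)
    {y : ι → ℚ} (hys : ∀ j ∉ s, y j = 0) {u : Fin m → ℤ} {U : ℕ} (hu : ∀ i, |u i| ≤ U)
    (hAy : A.map (Int.cast : ℤ → ℚ) *ᵥ y = Int.cast ∘ u) :
    ∃ D : ℤ, D ≠ 0 ∧ |D| ≤ m ! * Δ ^ m ∧
      ∃ z : ι → ℤ, (∀ j, (z j : ℚ) = D * y j) ∧ ∀ j, |z j| ≤ cramerBound m Δ U := by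
  classical
  obtain ⟨T, σ, hdet⟩ := exists_det_unitCompletion_ne_zero A hs
  set M := (A.unitCompletion s T).submatrix id σ.symm
  have hM : ∀ i k, |M i k| ≤ Δ := fun i k => abs_unitCompletion_le hΔ hΔ1 s T i (σ.symm k)
  set ŷ : Fin m → ℚ := Sum.elim (fun a : s => y a) 0 ∘ σ.symm
  have hMy : M.map (Int.cast : ℤ → ℚ) *ᵥ ŷ = Int.cast ∘ u := by
    funext i
    rw [← hAy]
    simp only [mulVec, dotProduct, M, unitCompletion, ŷ]
    rw [← Equiv.sum_comp σ]
    simp only [map_apply, submatrix_apply, id_eq, Equiv.symm_apply_apply, Function.comp_apply,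
      Fintype.sum_sum_type, fromCols_apply_inl, Sum.elim_inl, fromCols_apply_inr, Sum.elim_inr,
      Pi.zero_apply, mul_zero, sum_const_zero, add_zero]
    rw [← Fintype.sum_subtype_add_sum_subtype (· ∈ s),
      Fintype.sum_eq_zero (fun j : {j // j ∉ s} => (A i j : ℚ) * y j) (by simp +contextual [hys]),
      add_zero]
  have hcram := (Int.castRingHom ℚ).comp_cramer_of_mulVec_eq M u hMy
  refine ⟨M.det, hdet, ?_, fun j => if hj : j ∈ s then M.cramer u (σ (.inl ⟨j, hj⟩)) else 0, ?_, ?_⟩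
  · simpa using det_le (abv := AbsoluteValue.abs) hM
  · intro j
    dsimp only
    split_ifs with hj
    · simpa [ŷ] using congrFun hcram (σ (.inl ⟨j, hj⟩))
    · simp [hys j hj]
  · intro j
    dsimp only
    split_ifs
    · simpa [cramerBound] using abs_cramer_le hM hu _
    · simp

theorem exists_mulVec_eq_zero_abs_le (A : Matrix (Fin m) ι ℤ) {Δ : ℕ} (hΔ : ∀ i j, |A i j| ≤ Δ)
    (hΔ1 : 1 ≤ Δ) {s : Set ι} (hs : ¬ LinearIndepOn ℚ (A.map (Int.cast : ℤ → ℚ)).col s) :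
    ∃ d : ι → ℤ, d ≠ 0 ∧ A *ᵥ d = 0 ∧ (∀ j ∉ s, d j = 0) ∧ ∀ j, |d j| ≤ cramerBound m Δ Δ := by
  classical
  obtain ⟨I, hIs, hI, t, hts, htI, y, hyI, hAy⟩ := exists_mulVec_eq_col_of_not_linearIndepOn _ hs
  obtain ⟨D, hD0, hD, z, hz, hzle⟩ :=
    exists_denominator_of_mulVec_eq A hΔ hΔ1 hI hyI (U := Δ) (fun i => hΔ i t) hAy
  have hz0 : ∀ j ∉ I, z j = 0 := fun j hj => by
    have : (z j : ℚ) = 0 := by rw [hz, hyI j hj, mul_zero]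
    exact_mod_cast this
  have hzt := hz0 t htI
  -- `d = D • (eₜ - y)`, an integer vector in the kernel
  refine ⟨D • Pi.single t 1 - z, fun h => hD0 ?_, ?_, fun j hj => ?_, fun j => ?_⟩
  · simpa [hzt] using congrFun h t
  · have hcast : (Int.cast ∘ (D • Pi.single t 1 - z) : ι → ℚ) = (D : ℚ) • (Pi.single t 1 - y) := by
      funext j
      rcases eq_or_ne j t with rfl | hjt
      · simp [hzt, hyI j htI]
      · simp [hjt, hz]
    have key : Int.cast ∘ (A *ᵥ (D • Pi.single t 1 - z)) = (0 : Fin m → ℚ) := by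
      rw [intCast_comp_mulVec, hcast, mulVec_smul, mulVec_sub, hAy, mulVec_single_one, sub_self,
        smul_zero]
    funext i
    simpa using congrFun key i
  · have hjt : j ≠ t := by rintro rfl; exact hj hts
    simp [hjt, hz0 j fun h => hj (hIs h)]
  · rcases eq_or_ne j t with rfl | hjt
    · simp only [Pi.sub_apply, Pi.smul_apply, Pi.single_eq_same, smul_eq_mul, mul_one, hzt,
        sub_zero]
      refine hD.trans ?_
      simp only [cramerBound, Nat.cast_mul, Nat.cast_pow, mul_assoc, ← pow_succ]
      gcongr
      · exact_mod_cast hΔ1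
      · omega
    · simpa [hjt] using hzle j

end CramerBounds

def IsKernelMinimal {κ ι : Type*} [Fintype ι] (A : Matrix κ ι ℤ) (x : ι → ℤ) : Prop :=
  ∀ d : ι → ℤ, A *ᵥ d = 0 → (∀ j, |d j| ≤ x j) → d = 0

namespace IsKernelMinimal

variable {m : ℕ} {ι : Type*} [Fintype ι] {A : Matrix (Fin m) ι ℤ} {x : ι → ℤ} {Δ : ℕ}

theorem linearIndepOn_col (hx : IsKernelMinimal A x) (hx0 : 0 ≤ x) (hΔ : ∀ i j, |A i j| ≤ Δ)
    (hΔ1 : 1 ≤ Δ) :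
    LinearIndepOn ℚ (A.map (Int.cast : ℤ → ℚ)).col {j | (cramerBound m Δ Δ : ℤ) < x j} := by
  by_contra h
  obtain ⟨d, hd0, hAd, hds, hdle⟩ := exists_mulVec_eq_zero_abs_le A hΔ hΔ1 h
  refine hd0 (hx d hAd fun j => ?_)
  by_cases hj : (cramerBound m Δ Δ : ℤ) < x j
  · exact (hdle j).trans hj.le
  · rw [hds j hj, abs_zero]
    exact hx0 j

theorem le_of_cramerBound_lt (hx : IsKernelMinimal A x) (hx0 : 0 ≤ x) {b : Fin m → ℤ}
    (hAx : A *ᵥ x = b) (hΔ : ∀ i j, |A i j| ≤ Δ) (hΔ1 : 1 ≤ Δ) {B : ℕ} (hb : ∀ i, |b i| ≤ B)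
    {j : ι} (hj : (cramerBound m Δ Δ : ℤ) < x j) :
    x j ≤ cramerBound m Δ (B + Fintype.card ι * Δ * cramerBound m Δ Δ) := by
  classical
  set H := cramerBound m Δ Δ
  let xL : ι → ℤ := fun j => if (H : ℤ) < x j then x j else 0
  have hsmall : ∀ j, |(x - xL) j| ≤ H := by
    intro j
    by_cases h : (H : ℤ) < x j
    · simp [xL, h]
    · simp only [xL, h, if_false, Pi.sub_apply, sub_zero, abs_of_nonneg (hx0 j)]
      exact not_lt.1 h
  have hu : ∀ i, |(A *ᵥ xL) i| ≤ (B + Fintype.card ι * Δ * H : ℕ) := by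
    intro i
    have hsplit : A *ᵥ xL = b - A *ᵥ (x - xL) := by rw [mulVec_sub, hAx, sub_sub_cancel]
    rw [hsplit, Pi.sub_apply]
    calc |b i - (A *ᵥ (x - xL)) i| ≤ |b i| + |(A *ᵥ (x - xL)) i| := abs_sub _ _
      _ ≤ B + Fintype.card ι * (Δ * H) := add_le_add (hb i) (abs_mulVec_le hΔ hsmall i)
      _ = (B + Fintype.card ι * Δ * H : ℕ) := by push_cast; ring
  have hxL : ∀ j ∉ {j | (H : ℤ) < x j}, ((xL j : ℤ) : ℚ) = 0 := fun j hj => by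
    rw [show xL j = 0 from if_neg hj, Int.cast_zero]
  obtain ⟨D, hD0, -, z, hz, hzle⟩ := exists_denominator_of_mulVec_eq A hΔ hΔ1
    (hx.linearIndepOn_col hx0 hΔ hΔ1) hxL hu (intCast_comp_mulVec A xL).symm
  have hzj : z j = D * x j := by
    have : (z j : ℚ) = (D * x j : ℤ) := by simp [hz, xL, hj]
    exact_mod_cast this
  calc x j ≤ |D| * x j := le_mul_of_one_le_left (hx0 j) (Int.one_le_abs hD0)
    _ = |z j| := by rw [hzj, abs_mul, abs_of_nonneg (hx0 j)]
    _ ≤ _ := hzle j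

theorem sum_le (hx : IsKernelMinimal A x) (hx0 : 0 ≤ x) {b : Fin m → ℤ} (hAx : A *ᵥ x = b)
    (hΔ : ∀ i j, |A i j| ≤ Δ) (hΔ1 : 1 ≤ Δ) {B : ℕ} (hb : ∀ i, |b i| ≤ B) :
    ∑ j, x j ≤ (Fintype.card ι * cramerBound m Δ Δ +
      m * cramerBound m Δ (B + Fintype.card ι * Δ * cramerBound m Δ Δ) : ℕ) := by
  classical
  set H := cramerBound m Δ Δ
  set L := cramerBound m Δ (B + Fintype.card ι * Δ * H)
  set S := univ.filter fun j => (H : ℤ) < x j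
  have hS : S.card ≤ m := by
    have hli : LinearIndepOn ℚ (A.map (Int.cast : ℤ → ℚ)).col ↑S := by
      simpa [S] using hx.linearIndepOn_col hx0 hΔ hΔ1
    simpa using hli.linearIndependent.fintype_card_le_finrank
  rw [← sum_filter_add_sum_filter_not univ fun j => (H : ℤ) < x j]
  calc ∑ j ∈ S, x j + ∑ j ∈ univ.filter (fun j => ¬ (H : ℤ) < x j), x j
      ≤ ∑ _j ∈ S, (L : ℤ) + ∑ _j ∈ univ.filter (fun j => ¬ (H : ℤ) < x j), (H : ℤ) := by
        gcongr with j hj j hj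
        · exact hx.le_of_cramerBound_lt hx0 hAx hΔ hΔ1 hb (mem_filter.1 hj).2
        · exact not_lt.1 (mem_filter.1 hj).2
    _ ≤ m * L + Fintype.card ι * H := by
        simp only [sum_const, nsmul_eq_mul]
        gcongr
        exact_mod_cast card_le_univ _
    _ = _ := by push_cast; ring

end IsKernelMinimal

theorem exists_isMaxOn_of_bddAbove {α : Type*} {s : Set α} {f : α → ℤ} (hs : s.Nonempty)
    (hf : BddAbove (f '' s)) : ∃ a ∈ s, IsMaxOn f s a := by
  obtain ⟨a, ha, hfa⟩ := Int.csSup_mem (hs.image f) hf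
  exact ⟨a, ha, fun b hb => hfa ▸ le_csSup hf (Set.mem_image_of_mem f hb)⟩

section
variable {κ ι R : Type*} [Fintype ι] [CommRing R] [LinearOrder R] [IsStrictOrderedRing R]

theorem IsMaxOn.dotProduct_add_sub {S : Set (ι → R)} {w x d : ι → R}
    (hx : IsMaxOn (w ⬝ᵥ ·) S x) (hadd : x + d ∈ S) (hsub : x - d ∈ S) :
    IsMaxOn (w ⬝ᵥ ·) S (x + d) ∧ IsMaxOn (w ⬝ᵥ ·) S (x - d) := by
  have h₁ := isMaxOn_iff.1 hx _ hadd
  have h₂ := isMaxOn_iff.1 hx _ hsub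
  simp only [dotProduct_add, dotProduct_sub] at h₁ h₂
  have hwd : w ⬝ᵥ d = 0 := by linarith
  constructor <;> intro y hy <;> simpa [dotProduct_add, dotProduct_sub, hwd] using hx hy

theorem add_sub_mem_of_abs_le {A : Matrix κ ι R} {b : κ → R} {x d : ι → R}
    (hx : x ∈ {y | 0 ≤ y ∧ A *ᵥ y = b}) (hd : A *ᵥ d = 0) (hdx : ∀ j, |d j| ≤ x j) :
    x + d ∈ {y | 0 ≤ y ∧ A *ᵥ y = b} ∧ x - d ∈ {y | 0 ≤ y ∧ A *ᵥ y = b} := by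
  refine ⟨⟨fun j => ?_, by rw [mulVec_add, hd, hx.2, add_zero]⟩,
    ⟨fun j => ?_, by rw [mulVec_sub, hd, hx.2, sub_zero]⟩⟩ <;>
  · have := abs_le.1 (hdx j)
    simp only [Pi.zero_apply, Pi.add_apply, Pi.sub_apply]
    linarith

end

theorem exists_isMaxOn_isKernelMinimal {κ ι : Type*} [Fintype ι] (A : Matrix κ ι ℤ) (b : κ → ℤ)
    (c : ι → ℤ) (hfeas : ∃ x : ι → ℤ, 0 ≤ x ∧ A *ᵥ x = b)
    (hbdd : BddAbove {v : ℤ | ∃ x : ι → ℤ, 0 ≤ x ∧ A *ᵥ x = b ∧ c ⬝ᵥ x = v}) :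
    ∃ x, IsMaxOn (c ⬝ᵥ ·) {y | 0 ≤ y ∧ A *ᵥ y = b} x ∧ 0 ≤ x ∧ A *ᵥ x = b ∧
      IsKernelMinimal A x := by
  set P := {y | 0 ≤ y ∧ A *ᵥ y = b}
  obtain ⟨M, hM⟩ := hbdd
  obtain ⟨x₁, hx₁, hmax₁⟩ := exists_isMaxOn_of_bddAbove (s := P) (f := (c ⬝ᵥ ·)) hfeas
    ⟨M, by rintro _ ⟨y, hy, rfl⟩; exact hM ⟨y, hy.1, hy.2, rfl⟩⟩
  set Opt := {y | y ∈ P ∧ IsMaxOn (c ⬝ᵥ ·) P y}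
  obtain ⟨x₂, hx₂, hmax₂⟩ := exists_isMaxOn_of_bddAbove (s := Opt) (f := ((-1) ⬝ᵥ ·))
    ⟨x₁, hx₁, hmax₁⟩ ⟨0, by
      rintro _ ⟨y, hy, rfl⟩
      simpa using dotProduct_nonneg_of_nonneg zero_le_one hy.1.1⟩
  set Opt₂ := {y | y ∈ Opt ∧ IsMaxOn ((-1) ⬝ᵥ ·) Opt y}
  obtain ⟨x, hx, hmax⟩ := exists_isMaxOn_of_bddAbove (s := Opt₂) (f := fun y => y ⬝ᵥ y)
    ⟨x₂, hx₂, hmax₂⟩ ⟨((-1) ⬝ᵥ x₂) ^ 2, by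
      rintro _ ⟨y, hy, rfl⟩
      have h := le_antisymm (isMaxOn_iff.1 hy.2 x₂ hx₂) (isMaxOn_iff.1 hmax₂ y hy.1)
      rw [h, neg_dotProduct, neg_sq, one_dotProduct]
      simpa [dotProduct, sq] using sum_sq_le_sq_sum_of_nonneg fun j _ => hy.1.1.1 j⟩
  refine ⟨x, hx.1.2, hx.1.1.1, hx.1.1.2, fun d hd hdx => ?_⟩
  obtain ⟨hadd, hsub⟩ := add_sub_mem_of_abs_le hx.1.1 hd hdx
  obtain ⟨oadd, osub⟩ := hx.1.2.dotProduct_add_sub hadd hsub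
  obtain ⟨padd, psub⟩ := hx.2.dotProduct_add_sub ⟨hadd, oadd⟩ ⟨hsub, osub⟩
  have h₁ := isMaxOn_iff.1 hmax _ ⟨⟨hadd, oadd⟩, padd⟩
  have h₂ := isMaxOn_iff.1 hmax _ ⟨⟨hsub, osub⟩, psub⟩
  have hpar : (x + d) ⬝ᵥ (x + d) + (x - d) ⬝ᵥ (x - d) = 2 * (x ⬝ᵥ x) + 2 * (d ⬝ᵥ d) := by
    simp only [add_dotProduct, dotProduct_add, sub_dotProduct, dotProduct_sub, dotProduct_comm d x]
    ring
  have hdd : d ⬝ᵥ d ≤ 0 := by linarith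
  exact dotProduct_self_eq_zero.1 (le_antisymm hdd (sum_nonneg fun j _ => mul_self_nonneg (d j)))

theorem cramerBound_sum_le {m n Δ B : ℕ} (hm : 1 ≤ m) (hn : 1 ≤ n) (hΔ : 1 ≤ Δ) (hB : 1 ≤ B) :
    n * cramerBound m Δ Δ + m * cramerBound m Δ (B + n * Δ * cramerBound m Δ Δ) ≤
      n ^ 2 * (m * (Δ + B)) ^ (2 * m + 1) := by
  obtain ⟨k, rfl⟩ := Nat.exists_eq_add_of_le' hm
  set P := (k + 1) ^ (k + 1)
  set Q := (Δ + B) ^ (k + 1)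
  have hF : (k + 1)! ≤ P := Nat.factorial_le_pow _
  have hP : 1 ≤ P := Nat.one_le_pow _ _ (by omega)
  have hQ : 2 ≤ Q := le_self_pow (by omega) (by omega) |>.trans' (by omega)
  calc _ ≤ n * (P * Q) + (k + 1) * (P * (Δ + B) ^ k * ((Δ + B) + n * (Δ + B) * (P * Q))) := by
        simp only [cramerBound, Nat.add_sub_cancel, Q, pow_succ, ← mul_assoc]
        gcongr <;> omega
    _ = n * (P * Q) + (k + 1) * (P * Q) + n * (k + 1) * (P * Q) ^ 2 := by
        simp only [Q, pow_succ]; ring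
    _ ≤ n * (k + 1) * (P * Q) ^ 2 * 2 := by
        have hPQ : 2 ≤ P * Q := by nlinarith
        generalize P * Q = X at hPQ ⊢
        have h1 : n * X ≤ n * (k + 1) * X := by gcongr; exact Nat.le_mul_of_pos_right _ (by omega)
        have h2 : (k + 1) * X ≤ n * (k + 1) * X := by gcongr; exact Nat.le_mul_of_pos_left _ hn
        have h3 : 2 * (n * (k + 1) * X) ≤ n * (k + 1) * X * X := by rw [mul_comm 2]; gcongr
        nlinarith
    _ ≤ n ^ 2 * (k + 1) * (P * Q) ^ 2 * (Δ + B) := by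
        rw [sq n]
        gcongr
        · exact Nat.le_mul_of_pos_right _ hn
        · omega
    _ = n ^ 2 * ((k + 1) * (Δ + B)) ^ (2 * (k + 1) + 1) := by
        simp only [P, Q, mul_pow]; ring

/-- Papadimitriou's bound: if the integer program `max{cᵀx : Ax = b, x ∈ ℤⁿ, x ≥ 0}`
is feasible and bounded, then it has an optimal solution `x*` with
`‖x*‖₁ ≤ n²·(m·(Δ + ‖b‖_∞))^(2m+1)`. -/
theorem papadimitriou_norm_bound {m n : ℕ} (A : Matrix (Fin m) (Fin n) ℤ)
    (b : Fin m → ℤ) (c : Fin n → ℤ) (Δ : ℕ)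
    (hΔ : ∀ i j, |A i j| ≤ (Δ : ℤ))
    (hfeas : ∃ x : Fin n → ℤ, 0 ≤ x ∧ A.mulVec x = b)
    (hbdd : BddAbove {v : ℤ | ∃ x : Fin n → ℤ, 0 ≤ x ∧ A.mulVec x = b ∧ c ⬝ᵥ x = v}) :
    ∃ x' : Fin n → ℤ, 0 ≤ x' ∧ A.mulVec x' = b ∧
      (∀ x : Fin n → ℤ, 0 ≤ x → A.mulVec x = b → c ⬝ᵥ x ≤ c ⬝ᵥ x') ∧
      ∑ i, |x' i| ≤
        ((n ^ 2 * (m * (Δ + Finset.univ.sup fun i => (b i).natAbs)) ^ (2 * m + 1) : ℕ) : ℤ) := by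
  obtain ⟨x, hmax, hx0, hAx, hx⟩ := exists_isMaxOn_isKernelMinimal A b c hfeas hbdd
  refine ⟨x, hx0, hAx, fun y hy hyb => isMaxOn_iff.1 hmax y ⟨hy, hyb⟩, ?_⟩
  set B := univ.sup fun i => (b i).natAbs
  have hb : ∀ i, |b i| ≤ B := fun i => by
    rw [Int.abs_eq_natAbs]
    exact_mod_cast le_sup (f := fun i => (b i).natAbs) (mem_univ i)
  rw [sum_congr rfl fun j _ => abs_of_nonneg (hx0 j)]
  by_cases hb0 : b = 0
  · rw [hx x (by rw [hAx, hb0]) fun j => (abs_of_nonneg (hx0 j)).le]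
    simp only [Pi.zero_apply, sum_const_zero, Nat.cast_nonneg]
  obtain ⟨i, hi⟩ : ∃ i, b i ≠ 0 := Function.ne_iff.1 hb0
  obtain ⟨j, -, hj⟩ := exists_ne_zero_of_sum_ne_zero (s := univ) (f := fun j => A i j * x j)
    (by rwa [← hAx] at hi)
  have hΔ1 : 1 ≤ Δ := by
    have := (Int.one_le_abs (left_ne_zero_of_mul hj)).trans (hΔ i j)
    exact_mod_cast this
  have hB : 1 ≤ B := by
    have := (Int.one_le_abs hi).trans (hb i)
    exact_mod_cast this
  refine (hx.sum_le hx0 hAx hΔ hΔ1 hb).trans ?_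
  rw [Fintype.card_fin]
  exact_mod_cast cramerBound_sum_le i.pos j.pos hΔ1 hB
end

section
/- Let A ∈ ℤ^{m×n}, let H ≥ herdisc(A) be a real number, let b ∈ ℤ^m, let K ≥ 1 and i ∈ {1,…,K} be integers, and let b' ∈ ℤ^m satisfy ‖b' − 2^{i−K}·b‖_∞ ≤ 4H. Then for every x ∈ ℤ^n with x ≥ 0 componentwise, Ax = b' and ‖x‖₁ ≤ (6/5)^i, there exists z ∈ ℤ^n with 0 ≤ z_i ≤ x_i for all i, ‖z‖₁ ≤ (6/5)^{i−1}, ‖x − z‖₁ ≤ (6/5)^{i−1}, ‖Az − 2^{(i−1)−K}·b‖_∞ ≤ 4H, and ‖A(x − z) − 2^{(i−1)−K}·b‖_∞ ≤ 4H. -/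
/-!
Write `x = 2⌊x/2⌋ + 𝟙_I` with `I` the set of odd coordinates of `x`, and take
`z = ⌊x/2⌋ + 𝟙_T` for some `T ⊆ I`. Then `Az − Ax/2` is `A` applied to the `±½`-colouring of `I`
given by `T`, so a colouring of discrepancy `≤ 2 herdisc A` keeps both `Az` and `A(x − z)` within
`2H` of `b'/2`, hence within `4H` of `2^{i−1−K} b`. To keep `‖z‖₁` and `‖x − z‖₁` close to `‖x‖₁/2`
as well, split `I` into halves `P`, `Q` and colour each with discrepancy `≤ herdisc A`, taking
(after complementing if necessary) the larger colour class on `P` and the smaller one on `Q`.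
Then `|2|T| − |I|| ≤ ⌈|I|/2⌉`, so `4‖z‖₁ ≤ 3‖x‖₁ + 1`, and `(3N + 1)/4 ≤ 5N/6` once `N ≥ 3`.
-/

open Matrix Finset

section HalfSign

variable {ι : Type*} [DecidableEq ι]

noncomputable def halfSign (S T : Finset ι) : ι → ℝ :=
  fun j => if j ∈ S then (if j ∈ T then 1 / 2 else -(1 / 2)) else 0

theorem halfSign_sdiff (S T : Finset ι) : halfSign S (S \ T) = -halfSign S T := by
  ext j
  by_cases hS : j ∈ S <;> by_cases hT : j ∈ T <;> simp [halfSign, hS, hT]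

theorem halfSign_union {P Q TP TQ : Finset ι} (hPQ : Disjoint P Q) (hTP : TP ⊆ P)
    (hTQ : TQ ⊆ Q) : halfSign (P ∪ Q) (TP ∪ TQ) = halfSign P TP + halfSign Q TQ := by
  ext j
  by_cases hP : j ∈ P
  · have hQ : j ∉ Q := disjoint_left.mp hPQ hP
    have hTQ' : j ∉ TQ := fun h => hQ (hTQ h)
    simp [halfSign, hP, hQ, hTQ']
  · have hTP' : j ∉ TP := fun h => hP (hTP h)
    simp [halfSign, hP, hTP']

end HalfSign

section Herdisc

variable {m n : ℕ} (B : Matrix (Fin m) (Fin n) ℝ)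

theorem exists_mulVec_halfSign_norm_le_herdisc (S : Finset (Fin n)) :
    ∃ T ⊆ S, ‖B *ᵥ halfSign S T‖ ≤ herdisc B := by
  obtain ⟨ε, -, hε⟩ := exists_mem_eq_inf' univ_nonempty fun z : Fin n → Bool =>
    ‖(fun i : Fin m => ∑ j ∈ S, B i j * ((if z j then (1 : ℝ) else 0) - 1/2))‖
  refine ⟨S.filter (ε ·), filter_subset _ _, ?_⟩
  have hcolor : B *ᵥ halfSign S (S.filter (ε ·)) =
      fun i => ∑ j ∈ S, B i j * ((if ε j then (1 : ℝ) else 0) - 1/2) := by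
    ext i
    simp only [mulVec, dotProduct, halfSign, mul_ite, mul_zero, sum_ite_mem, univ_inter, mem_filter]
    refine sum_congr rfl fun j hj => ?_
    cases ε j <;> norm_num [hj]
  rw [hcolor, ← hε]
  exact le_sup'_of_le _ (mem_univ S) le_rfl

theorem exists_mulVec_halfSign_norm_le_herdisc_and_card_le (S : Finset (Fin n)) :
    ∃ T ⊆ S, ‖B *ᵥ halfSign S T‖ ≤ herdisc B ∧ #S ≤ 2 * #T := by
  obtain ⟨T, hTS, hT⟩ := exists_mulVec_halfSign_norm_le_herdisc B S
  by_cases hcard : #S ≤ 2 * #T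
  · exact ⟨T, hTS, hT, hcard⟩
  · refine ⟨S \ T, sdiff_subset, ?_, ?_⟩
    · rwa [halfSign_sdiff, mulVec_neg, norm_neg]
    · rw [card_sdiff_of_subset hTS]
      have := card_le_card hTS
      omega

theorem exists_balanced_mulVec_halfSign_norm_le (S : Finset (Fin n)) :
    ∃ T ⊆ S, ‖B *ᵥ halfSign S T‖ ≤ 2 * herdisc B ∧ 4 * #T ≤ 3 * #S + 1 ∧ #S ≤ 4 * #T := by
  obtain ⟨P, hPS, hP⟩ := exists_subset_card_eq (s := S) (n := (#S + 1) / 2) (by omega)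
  set Q := S \ P
  obtain ⟨TP, hTP, hdiscP, hcardP⟩ := exists_mulVec_halfSign_norm_le_herdisc_and_card_le B P
  obtain ⟨TQ, hTQ, hdiscQ, hcardQ⟩ := exists_mulVec_halfSign_norm_le_herdisc_and_card_le B Q
  have hPQ : Disjoint P Q := disjoint_sdiff
  have hsplit : halfSign S (TP ∪ Q \ TQ) = halfSign P TP - halfSign Q TQ := by
    rw [← union_sdiff_of_subset hPS, halfSign_union hPQ hTP sdiff_subset, halfSign_sdiff,
      sub_eq_add_neg]
  have hcardT : #(TP ∪ Q \ TQ) = #TP + (#Q - #TQ) := by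
    rw [card_union_of_disjoint (hPQ.mono hTP sdiff_subset), card_sdiff_of_subset hTQ]
  have hcardQ' : #Q = #S - #P := card_sdiff_of_subset hPS
  have := card_le_card hTP
  have := card_le_card hTQ
  refine ⟨TP ∪ Q \ TQ, union_subset (hTP.trans hPS) (sdiff_subset.trans sdiff_subset), ?_, ?_, ?_⟩
  · rw [hsplit, mulVec_sub, two_mul]
    exact (norm_sub_le _ _).trans (add_le_add hdiscP hdiscQ)
  · omega
  · omega

end Herdisc

section Halving

variable {ι : Type*}

def roundHalf [DecidableEq ι] (x : ι → ℤ) (T : Finset ι) : ι → ℤ :=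
  fun j => x j / 2 + if j ∈ T then 1 else 0

theorem roundHalf_nonneg [DecidableEq ι] {x : ι → ℤ} (hx : 0 ≤ x) (T : Finset ι) :
    0 ≤ roundHalf x T := by
  intro j
  have : 0 ≤ x j := hx j
  simp only [roundHalf, Pi.zero_apply]
  split_ifs <;> omega

variable [Fintype ι]

def oddIndices (x : ι → ℤ) : Finset ι := univ.filter fun j => Odd (x j)

theorem sum_eq_two_mul_sum_div_two_add_card_oddIndices (x : ι → ℤ) :
    ∑ j, x j = 2 * ∑ j, x j / 2 + #(oddIndices x) := by
  have hmod : ∀ j, x j % 2 = if Odd (x j) then 1 else 0 := by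
    intro j
    split_ifs with h
    · exact Int.odd_iff.mp h
    · exact Int.even_iff.mp (Int.not_odd_iff_even.mp h)
  calc ∑ j, x j = ∑ j, (2 * (x j / 2) + x j % 2) :=
        sum_congr rfl fun j _ => (Int.mul_ediv_add_emod (x j) 2).symm
    _ = 2 * ∑ j, x j / 2 + #(oddIndices x) := by
        simp only [sum_add_distrib, ← mul_sum, hmod, sum_boole, oddIndices]

variable [DecidableEq ι]

theorem roundHalf_le {x : ι → ℤ} (hx : 0 ≤ x) {T : Finset ι} (hT : T ⊆ oddIndices x) :
    roundHalf x T ≤ x := by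
  intro j
  have : 0 ≤ x j := hx j
  by_cases hj : j ∈ T
  · have hodd : x j % 2 = 1 := Int.odd_iff.mp (mem_filter.mp (hT hj)).2
    simp only [roundHalf, if_pos hj]
    omega
  · simp only [roundHalf, if_neg hj]
    omega

theorem cast_roundHalf_sub_half {x : ι → ℤ} {T : Finset ι} (hT : T ⊆ oddIndices x) :
    (fun j => (roundHalf x T j : ℝ)) - (1 / 2 : ℝ) • (fun j => (x j : ℝ)) =
      halfSign (oddIndices x) T := by
  ext j
  have hdiv : (x j : ℝ) = 2 * ((x j / 2 : ℤ) : ℝ) + ((x j % 2 : ℤ) : ℝ) := by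
    exact_mod_cast (Int.mul_ediv_add_emod (x j) 2).symm
  by_cases hodd : Odd (x j)
  · rw [Int.odd_iff.mp hodd] at hdiv
    have hI : j ∈ oddIndices x := mem_filter.mpr ⟨mem_univ j, hodd⟩
    by_cases hj : j ∈ T <;> simp [roundHalf, halfSign, hI, hj, hdiv] <;> ring
  · rw [Int.even_iff.mp (Int.not_odd_iff_even.mp hodd)] at hdiv
    have hI : j ∉ oddIndices x := fun h => hodd (mem_filter.mp h).2
    have hj : j ∉ T := fun h => hI (hT h)
    simp [roundHalf, halfSign, hI, hj, hdiv]

theorem sum_roundHalf (x : ι → ℤ) (T : Finset ι) :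
    ∑ j, roundHalf x T j = ∑ j, x j / 2 + #T := by
  simp [roundHalf, sum_add_distrib]

theorem four_mul_sum_roundHalf_le {x : ι → ℤ} (hx : 0 ≤ x) {T : Finset ι}
    (hT : 4 * #T ≤ 3 * #(oddIndices x) + 1) : 4 * ∑ j, roundHalf x T j ≤ 3 * ∑ j, x j + 1 := by
  have : 0 ≤ ∑ j, x j / 2 := sum_nonneg fun j _ => Int.ediv_nonneg (hx j) zero_le_two
  rw [sum_roundHalf, sum_eq_two_mul_sum_div_two_add_card_oddIndices x]
  omega

theorem four_mul_sum_sub_roundHalf_le {x : ι → ℤ} (hx : 0 ≤ x) {T : Finset ι}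
    (hT : #(oddIndices x) ≤ 4 * #T) :
    4 * ∑ j, (x j - roundHalf x T j) ≤ 3 * ∑ j, x j + 1 := by
  have : 0 ≤ ∑ j, x j / 2 := sum_nonneg fun j _ => Int.ediv_nonneg (hx j) zero_le_two
  rw [sum_sub_distrib, sum_roundHalf, sum_eq_two_mul_sum_div_two_add_card_oddIndices x]
  omega

end Halving

theorem cast_le_of_four_mul_le {Z N : ℤ} {c : ℝ} (hc : 1 ≤ c) (hN : (N : ℝ) ≤ 6 / 5 * c)
    (hZ : 4 * Z ≤ 3 * N + 1) : (Z : ℝ) ≤ c := by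
  by_cases hN2 : N ≤ 2
  · have : Z ≤ 1 := by omega
    exact le_trans (by exact_mod_cast this) hc
  · have hN3 : (3 : ℝ) ≤ N := by exact_mod_cast (by omega : 3 ≤ N)
    have hZ' : 4 * (Z : ℝ) ≤ 3 * N + 1 := by exact_mod_cast hZ
    linarith

theorem norm_sub_half_smul_le {E : Type*} [SeminormedAddCommGroup E] [NormedSpace ℝ E]
    {u v w : E} {a b : ℝ} (hu : ‖u - (1 / 2 : ℝ) • v‖ ≤ a) (hv : ‖v - w‖ ≤ b) :
    ‖u - (1 / 2 : ℝ) • w‖ ≤ a + b / 2 :=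
  calc ‖u - (1 / 2 : ℝ) • w‖ = ‖(u - (1 / 2 : ℝ) • v) + (1 / 2 : ℝ) • (v - w)‖ := by
        rw [smul_sub, add_sub, sub_add_cancel]
    _ ≤ ‖u - (1 / 2 : ℝ) • v‖ + (1 / 2) * ‖v - w‖ := by
        grw [norm_add_le, norm_smul, Real.norm_of_nonneg (by norm_num)]
    _ ≤ a + b / 2 := by linarith

theorem norm_sub_zpow_pred_mul_le {κ : Type*} [Fintype κ] {u v b : κ → ℝ} {k : ℤ} {a c : ℝ}
    (hu : ‖u - (1 / 2 : ℝ) • v‖ ≤ a) (hv : ‖v - fun r => 2 ^ k * b r‖ ≤ c) :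
    ‖fun r => u r - 2 ^ (k - 1) * b r‖ ≤ a + c / 2 := by
  have hpow : (fun r => u r - 2 ^ (k - 1) * b r) = u - (1 / 2 : ℝ) • fun r => 2 ^ k * b r := by
    ext r
    simp only [Pi.sub_apply, Pi.smul_apply, smul_eq_mul, zpow_sub_one₀ (two_ne_zero' ℝ)]
    ring
  rw [hpow]
  exact norm_sub_half_smul_le hu hv

theorem cast_mulVec_eq_map_mulVec {R κ ι : Type*} [Ring R] [Fintype ι] (A : Matrix κ ι ℤ)
    (v : ι → ℤ) : (fun r => ((A *ᵥ v) r : R)) = A.map (Int.cast : ℤ → R) *ᵥ fun j => (v j : R) :=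
  funext ((Int.castRingHom R).map_mulVec A v)

theorem exists_balanced_half {m n : ℕ} (A : Matrix (Fin m) (Fin n) ℤ) {x : Fin n → ℤ}
    (hx : 0 ≤ x) :
    ∃ z : Fin n → ℤ, 0 ≤ z ∧ z ≤ x ∧
      4 * ∑ j, z j ≤ 3 * ∑ j, x j + 1 ∧ 4 * ∑ j, (x j - z j) ≤ 3 * ∑ j, x j + 1 ∧
      ‖(fun r => ((A *ᵥ z) r : ℝ)) - (1 / 2 : ℝ) • fun r => ((A *ᵥ x) r : ℝ)‖ ≤
        2 * herdisc (A.map Int.cast) ∧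
      ‖(fun r => ((A *ᵥ (x - z)) r : ℝ)) - (1 / 2 : ℝ) • fun r => ((A *ᵥ x) r : ℝ)‖ ≤
        2 * herdisc (A.map Int.cast) := by
  obtain ⟨T, hTI, hdisc, hT3, hT1⟩ :=
    exists_balanced_mulVec_halfSign_norm_le (A.map (Int.cast : ℤ → ℝ)) (oddIndices x)
  set v : Fin m → ℝ := fun r => ((A *ᵥ x) r : ℝ)
  have hz : (fun r => ((A *ᵥ roundHalf x T) r : ℝ)) - (1 / 2 : ℝ) • v =
      A.map Int.cast *ᵥ halfSign (oddIndices x) T := by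
    rw [cast_mulVec_eq_map_mulVec, show v = _ from cast_mulVec_eq_map_mulVec A x, ← mulVec_smul,
      ← mulVec_sub, cast_roundHalf_sub_half hTI]
  have hxz : (fun r => ((A *ᵥ (x - roundHalf x T)) r : ℝ)) - (1 / 2 : ℝ) • v =
      -((fun r => ((A *ᵥ roundHalf x T) r : ℝ)) - (1 / 2 : ℝ) • v) := by
    ext r
    simp only [v, mulVec_sub, Pi.sub_apply, Int.cast_sub, Pi.smul_apply, smul_eq_mul,
      Pi.neg_apply]
    ring
  refine ⟨roundHalf x T, roundHalf_nonneg hx T, roundHalf_le hx hTI,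
    four_mul_sum_roundHalf_le hx hT3, four_mul_sum_sub_roundHalf_le hx hT1, ?_, ?_⟩
  · rwa [hz]
  · rwa [hxz, norm_neg, hz]

theorem dynamic_program_split_general {m n : ℕ} (A : Matrix (Fin m) (Fin n) ℤ) (H : ℝ)
    (hH : herdisc (A.map (Int.cast : ℤ → ℝ)) ≤ H)
    (b : Fin m → ℤ) (K i : ℕ)
    (b' : Fin m → ℤ)
    (hb' : ‖(fun r : Fin m => (b' r : ℝ) - 2 ^ ((i : ℤ) - (K : ℤ)) * (b r : ℝ))‖ ≤ 4 * H) :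
    ∀ x : Fin n → ℤ, 0 ≤ x → A.mulVec x = b' →
      ((∑ j, |x j| : ℤ) : ℝ) ≤ (6 / 5 : ℝ) ^ i →
      ∃ z : Fin n → ℤ, (∀ j, 0 ≤ z j) ∧ (∀ j, z j ≤ x j) ∧
        ((∑ j, |z j| : ℤ) : ℝ) ≤ (6 / 5 : ℝ) ^ (i - 1) ∧
        ((∑ j, |x j - z j| : ℤ) : ℝ) ≤ (6 / 5 : ℝ) ^ (i - 1) ∧
        ‖(fun r : Fin m => ((A.mulVec z) r : ℝ) -
          2 ^ (((i : ℤ) - 1) - (K : ℤ)) * (b r : ℝ))‖ ≤ 4 * H ∧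
        ‖(fun r : Fin m => ((A.mulVec (x - z)) r : ℝ) -
          2 ^ (((i : ℤ) - 1) - (K : ℤ)) * (b r : ℝ))‖ ≤ 4 * H := by
  rintro x hx rfl hx1
  obtain ⟨z, hz0, hzx, hz1, hxz1, hzdisc, hxzdisc⟩ := exists_balanced_half A hx
  have hc : 1 ≤ (6 / 5 : ℝ) ^ (i - 1) := one_le_pow₀ (by norm_num)
  have hN : ((∑ j, x j : ℤ) : ℝ) ≤ 6 / 5 * (6 / 5 : ℝ) ^ (i - 1) := by
    rw [← pow_succ', ← sum_congr rfl fun j _ => abs_of_nonneg (hx j)]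
    exact hx1.trans (pow_le_pow_right₀ (by norm_num) (by omega))
  refine ⟨z, hz0, hzx, ?_, ?_, ?_, ?_⟩
  · rw [sum_congr rfl fun j _ => abs_of_nonneg (hz0 j)]
    exact cast_le_of_four_mul_le hc hN hz1
  · rw [sum_congr rfl fun j _ => abs_of_nonneg (sub_nonneg.mpr (hzx j))]
    exact cast_le_of_four_mul_le hc hN hxz1
  · rw [sub_right_comm]
    linarith [norm_sub_zpow_pred_mul_le hzdisc hb']
  · rw [sub_right_comm]
    linarith [norm_sub_zpow_pred_mul_le hxzdisc hb']

/-- Correctness of the dynamic-programming recursion: any nonnegative integer solution of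
`Ax = b'` with `‖x‖₁ ≤ (6/5)^i`, where `‖b' − 2^{i−K}b‖_∞ ≤ 4H` and
`H ≥ herdisc A`, splits as `x = z + (x − z)` into two halves of ℓ₁ norm at most
`(6/5)^{i−1}` whose right-hand sides are within `ℓ∞`-distance `4H` of `2^{(i−1)−K}b`. -/
theorem dynamic_program_split {m n : ℕ} (A : Matrix (Fin m) (Fin n) ℤ) (H : ℝ)
    (hH : herdisc (A.map (Int.cast : ℤ → ℝ)) ≤ H)
    (b : Fin m → ℤ) (K i : ℕ) (hi1 : 1 ≤ i) (hiK : i ≤ K)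
    (b' : Fin m → ℤ)
    (hb' : ‖(fun r : Fin m => (b' r : ℝ) - 2 ^ ((i : ℤ) - (K : ℤ)) * (b r : ℝ))‖ ≤ 4 * H) :
    ∀ x : Fin n → ℤ, 0 ≤ x → A.mulVec x = b' →
      ((∑ j, |x j| : ℤ) : ℝ) ≤ (6 / 5 : ℝ) ^ i →
      ∃ z : Fin n → ℤ, (∀ j, 0 ≤ z j) ∧ (∀ j, z j ≤ x j) ∧
        ((∑ j, |z j| : ℤ) : ℝ) ≤ (6 / 5 : ℝ) ^ (i - 1) ∧
        ((∑ j, |x j - z j| : ℤ) : ℝ) ≤ (6 / 5 : ℝ) ^ (i - 1) ∧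
        ‖(fun r : Fin m => ((A.mulVec z) r : ℝ) -
          2 ^ (((i : ℤ) - 1) - (K : ℤ)) * (b r : ℝ))‖ ≤ 4 * H ∧
        ‖(fun r : Fin m => ((A.mulVec (x - z)) r : ℝ) -
          2 ^ (((i : ℤ) - 1) - (K : ℤ)) * (b r : ℝ))‖ ≤ 4 * H :=
  dynamic_program_split_general A H hH b K i b' hb'
end

section
/- Let A ∈ ℤ^{m×n}, b ∈ ℤ^m and c ∈ ℤ^n, and suppose the set S = {x ∈ ℤ^n : Ax = b, x ≥ 0} is nonempty. Then the set of objective values {cᵀx : x ∈ S} is unbounded above if and only if there exists y ∈ ℤ^n with y ≥ 0 componentwise, Ay = 0, and cᵀy > 0. -/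
open Matrix Finset

/-!
If the objective is unbounded on the feasible set, there is a sequence of feasible points with
strictly increasing objective values. By Dickson's lemma (nonnegative integer vectors are
partially well ordered) two of them satisfy `x ≤ x'`, and `x' - x` is a nonnegative solution
of `Ay = 0` with positive objective. Conversely, if `y` is such a solution and `x` is feasible,
then the feasible points `x + k y` have objective values `cᵀx + k cᵀy → ∞`.
-/

theorem Set.IsPWO.exists_le_lt_of_not_bddAbove_image {α β : Type*} [Preorder α] [LinearOrder β]
    [Nonempty β] {s : Set α} (hs : s.IsPWO) {f : α → β} (hf : ¬BddAbove (f '' s)) :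
    ∃ x ∈ s, ∃ y ∈ s, x ≤ y ∧ f x < f y := by
  obtain ⟨u, hus, hu⟩ := exists_seq_of_forall_finset_exists (· ∈ s) (fun x y => f x < f y)
    fun t _ => by
      obtain ⟨M, hM⟩ := (t.image f).bddAbove
      obtain ⟨_, ⟨y, hys, rfl⟩, hy⟩ := not_bddAbove_iff.1 hf M
      exact ⟨y, hys, fun x hx => (hM (Finset.mem_image_of_mem f hx)).trans_lt hy⟩
  obtain ⟨i, j, hij, hle⟩ := hs.exists_lt hus
  exact ⟨u i, hus i, u j, hus j, hle, hu i j hij⟩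

theorem not_bddAbove_range_add_nsmul {α : Type*} [AddCommGroup α] [LinearOrder α]
    [IsOrderedAddMonoid α] [Archimedean α] (x : α) {a : α} (ha : 0 < a) :
    ¬BddAbove (Set.range fun k : ℕ => x + k • a) := by
  have : Nontrivial α := ⟨⟨0, a, ha.ne⟩⟩
  exact Filter.not_bddAbove_of_tendsto_atTop
    (Filter.tendsto_atTop_add_const_left _ x (Filter.tendsto_id.atTop_nsmul_const ha))

theorem isPWO_nonneg_int (n : Type*) [Finite n] : {x : n → ℤ | 0 ≤ x}.IsPWO := by
  refine ((Set.isPWO_of_wellQuasiOrderedLE Set.univ).image_of_monotone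
    (f := fun (k : n → ℕ) i => (k i : ℤ)) fun _ _ h i => Int.ofNat_le.2 (h i)).mono ?_
  intro x hx
  exact ⟨fun i => (x i).toNat, trivial, funext fun i => Int.toNat_of_nonneg (hx i)⟩

section FeasibleSet

variable {m n R : Type*} [Fintype n]

def feasibleSet [Semiring R] [Preorder R] (A : Matrix m n R) (b : m → R) : Set (n → R) :=
  {x | 0 ≤ x ∧ A *ᵥ x = b}

theorem add_nsmul_mem_feasibleSet [Semiring R] [PartialOrder R] [IsOrderedAddMonoid R]
    {A : Matrix m n R} {b : m → R} {x y : n → R} (hx : x ∈ feasibleSet A b)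
    (hy : y ∈ feasibleSet A 0) (k : ℕ) : x + k • y ∈ feasibleSet A b :=
  ⟨add_nonneg hx.1 (nsmul_nonneg hy.1 k), by
    rw [mulVec_add, mulVec_smul, hx.2, hy.2, smul_zero, add_zero]⟩

theorem sub_mem_feasibleSet_zero [Ring R] [PartialOrder R] [IsOrderedAddMonoid R]
    {A : Matrix m n R} {b : m → R} {x y : n → R} (hx : x ∈ feasibleSet A b)
    (hy : y ∈ feasibleSet A b) (hxy : x ≤ y) : y - x ∈ feasibleSet A 0 :=
  ⟨sub_nonneg.2 hxy, by rw [mulVec_sub, hx.2, hy.2, sub_self]⟩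

theorem setOf_exists_feasible_dotProduct_eq [Semiring R] [Preorder R] (A : Matrix m n R)
    (b : m → R) (c : n → R) :
    {v | ∃ x, 0 ≤ x ∧ A *ᵥ x = b ∧ c ⬝ᵥ x = v} = (c ⬝ᵥ ·) '' feasibleSet A b := by
  ext v
  simp [feasibleSet, and_assoc]

end FeasibleSet

/-- Characterization of unboundedness: if `{x ∈ ℤⁿ : Ax = b, x ≥ 0}` is nonempty, then
the objective values `{cᵀx}` are unbounded above iff there is `y ≥ 0` with `Ay = 0`
and `cᵀy > 0`. -/
theorem unbounded_iff_homogeneous {m n : ℕ} (A : Matrix (Fin m) (Fin n) ℤ)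
    (b : Fin m → ℤ) (c : Fin n → ℤ)
    (hfeas : ∃ x : Fin n → ℤ, 0 ≤ x ∧ A.mulVec x = b) :
    ¬ BddAbove {v : ℤ | ∃ x : Fin n → ℤ, 0 ≤ x ∧ A.mulVec x = b ∧ c ⬝ᵥ x = v}
    ↔ ∃ y : Fin n → ℤ, 0 ≤ y ∧ A.mulVec y = 0 ∧ 0 < c ⬝ᵥ y := by
  rw [setOf_exists_feasible_dotProduct_eq]
  constructor
  · intro hunb
    obtain ⟨x, hx, x', hx', hle, hlt⟩ :=
      ((isPWO_nonneg_int (Fin n)).mono fun _ h => h.1).exists_le_lt_of_not_bddAbove_image hunb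
    obtain ⟨hy0, hyA⟩ := sub_mem_feasibleSet_zero hx hx' hle
    exact ⟨x' - x, hy0, hyA, by rwa [dotProduct_sub, sub_pos]⟩
  · rintro ⟨y, hy0, hyA, hyc⟩ hbdd
    obtain ⟨x, hx⟩ := hfeas
    refine not_bddAbove_range_add_nsmul (c ⬝ᵥ x) hyc (hbdd.mono ?_)
    rintro _ ⟨k, rfl⟩
    exact ⟨x + k • y, add_nsmul_mem_feasibleSet hx ⟨hy0, hyA⟩ k, by
      simp only [dotProduct_add, dotProduct_smul]⟩
end

section
/- Let Δ ≥ 2 and m ≥ 1 be integers. Let w₁,…,w_n and C be nonnegative integers with base-Δ digit decompositions w_i = Σ_{k=0}^{m−1} Δ^k·w_i^{(k)} and C = Σ_{k=0}^{m−1} Δ^k·C^{(k)}, where 0 ≤ w_i^{(k)} < Δ and 0 ≤ C^{(k)} < Δ for all i and k. Let x ∈ ℤ^n with x ≥ 0 componentwise satisfy Σ_{i=1}^{n} w_i·x_i = C. Then there exist nonnegative integers y₀, y₁, …, y_m with y₀ = 0 and y_m = 0 such that for every ℓ ∈ {0,1,…,m−1}: Σ_{i=1}^{n} w_i^{(ℓ)}·x_i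 + y_ℓ = C^{(ℓ)} + Δ·y_{ℓ+1}. -/
open Finset

/-- Forward direction of the knapsack-to-(UKSm) reduction: if `Σᵢ wᵢxᵢ = C` and the
weights and capacity are written in base `Δ` with digits `wd i k` and `Cd k`, then
there exist nonnegative carries `y₀ = 0, y₁, …, y_{m−1}, y_m = 0` with
`Σᵢ wd i ℓ · xᵢ + y_ℓ = Cd ℓ + Δ·y_{ℓ+1}` for every `ℓ < m`. -/
theorem knapsack_to_UKSm {n : ℕ} (Δ : ℤ) (hΔ : 2 ≤ Δ) (m : ℕ) (hm : 1 ≤ m)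
    (w : Fin n → ℤ) (C : ℤ) (hw0 : ∀ i, 0 ≤ w i) (hC0 : 0 ≤ C)
    (wd : Fin n → ℕ → ℤ) (Cd : ℕ → ℤ)
    (hwdig : ∀ i, ∀ k < m, 0 ≤ wd i k ∧ wd i k < Δ)
    (hCdig : ∀ k < m, 0 ≤ Cd k ∧ Cd k < Δ)
    (hw : ∀ i, w i = ∑ k ∈ Finset.range m, Δ ^ k * wd i k)
    (hC : C = ∑ k ∈ Finset.range m, Δ ^ k * Cd k)
    (x : Fin n → ℤ) (hx : 0 ≤ x)
    (hsum : ∑ i, w i * x i = C) :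
    ∃ y : ℕ → ℤ, (∀ ℓ ≤ m, 0 ≤ y ℓ) ∧ y 0 = 0 ∧ y m = 0 ∧
      ∀ ℓ < m, (∑ i, wd i ℓ * x i) + y ℓ = Cd ℓ + Δ * y (ℓ + 1) := by
  have hx' : ∀ i, 0 ≤ x i := fun i => hx i
  have hΔ0 : (0:ℤ) < Δ := by linarith
  set T : ℕ → ℤ := fun ℓ =>
    (∑ i, (∑ k ∈ Finset.range ℓ, Δ ^ k * wd i k) * x i) -
      ∑ k ∈ Finset.range ℓ, Δ ^ k * Cd k with hT
  have hdvd : ∀ ℓ, ℓ ≤ m → (Δ ^ ℓ) ∣ T ℓ := by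
    intro ℓ hℓ
    have h1 : T ℓ =
        -((∑ i, (∑ k ∈ Finset.Ico ℓ m, Δ ^ k * wd i k) * x i) -
          ∑ k ∈ Finset.Ico ℓ m, Δ ^ k * Cd k) := by
      have hws : ∀ i : Fin n, (∑ k ∈ Finset.range ℓ, Δ ^ k * wd i k) +
          ∑ k ∈ Finset.Ico ℓ m, Δ ^ k * wd i k = w i := by
        intro i
        rw [hw i]
        exact Finset.sum_range_add_sum_Ico _ hℓ
      have hCs : (∑ k ∈ Finset.range ℓ, Δ ^ k * Cd k) +
          ∑ k ∈ Finset.Ico ℓ m, Δ ^ k * Cd k = C := by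
        rw [hC]
        exact Finset.sum_range_add_sum_Ico _ hℓ
      have : (∑ i, (∑ k ∈ Finset.range ℓ, Δ ^ k * wd i k) * x i) +
          ∑ i, (∑ k ∈ Finset.Ico ℓ m, Δ ^ k * wd i k) * x i = C := by
        rw [← hsum, ← Finset.sum_add_distrib]
        exact Finset.sum_congr rfl fun i _ => by rw [← add_mul, hws i]
      simp only [hT]
      linarith [this, hCs]
    rw [h1]
    refine dvd_neg.mpr (dvd_sub ?_ ?_)
    · refine Finset.dvd_sum fun i _ => Dvd.dvd.mul_right (Finset.dvd_sum fun k hk => ?_) _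
      exact Dvd.dvd.mul_right (pow_dvd_pow Δ (Finset.mem_Ico.mp hk).1) _
    · exact Finset.dvd_sum fun k hk =>
        Dvd.dvd.mul_right (pow_dvd_pow Δ (Finset.mem_Ico.mp hk).1) _
  set y : ℕ → ℤ := fun ℓ => T ℓ / Δ ^ ℓ with hy
  have hTy : ∀ ℓ, ℓ ≤ m → Δ ^ ℓ * y ℓ = T ℓ := fun ℓ hℓ =>
    Int.mul_ediv_cancel' (hdvd ℓ hℓ)
  have hTrec : ∀ ℓ, T (ℓ + 1) = T ℓ + Δ ^ ℓ * ((∑ i, wd i ℓ * x i) - Cd ℓ) := by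
    intro ℓ
    have hs : ∑ i, (Δ ^ ℓ * wd i ℓ) * x i = Δ ^ ℓ * ∑ i, wd i ℓ * x i := by
      rw [Finset.mul_sum]; exact Finset.sum_congr rfl fun i _ => by ring
    simp only [hT, Finset.sum_range_succ, add_mul, Finset.sum_add_distrib, hs]
    ring
  have hy0 : y 0 = 0 := by simp [hy, hT]
  have hym : y m = 0 := by
    have hTm : T m = 0 := by
      simp only [hT]
      rw [← hC, ← hsum]
      refine sub_eq_zero.mpr (Finset.sum_congr rfl fun i _ => by rw [← hw i])
    simp [hy, hTm]
  have heqn : ∀ ℓ, ℓ < m → (∑ i, wd i ℓ * x i) + y ℓ = Cd ℓ + Δ * y (ℓ + 1) := by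
    intro ℓ hℓ
    have h1 : Δ ^ (ℓ + 1) * y (ℓ + 1) = T ℓ + Δ ^ ℓ * ((∑ i, wd i ℓ * x i) - Cd ℓ) := by
      rw [hTy (ℓ + 1) hℓ, hTrec]
    rw [← hTy ℓ (le_of_lt hℓ)] at h1
    have hpow : (Δ:ℤ) ^ ℓ ≠ 0 := pow_ne_zero _ (by linarith)
    have h2 : Δ ^ ℓ * (Δ * y (ℓ + 1)) = Δ ^ ℓ * (y ℓ + ((∑ i, wd i ℓ * x i) - Cd ℓ)) := by
      linear_combination h1
    have := mul_left_cancel₀ hpow h2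
    linarith
  refine ⟨y, ?_, hy0, hym, heqn⟩
  intro ℓ hℓ
  induction ℓ with
  | zero => simp [hy0]
  | succ k ih =>
    have hk : k < m := hℓ
    have ihk := ih (le_of_lt hk)
    have hsumpos : 0 ≤ ∑ i, wd i k * x i :=
      Finset.sum_nonneg fun i _ => mul_nonneg (hwdig i k hk).1 (hx' i)
    have hCdk := hCdig k hk
    have h := heqn k hk
    have : Δ * y (k + 1) ≥ Δ * (-1) + 1 := by linarith
    nlinarith [this]
end

section
/- Let k ≥ 1 be an integer and let x ∈ ℤ^k with x ≥ 0 componentwise satisfy Σ_{i=1}^{k} x_i = k and Σ_{i=1}^{k} 2^{i−1}·x_i = 2^k − 1. Then x_i = 1 for all i ∈ {1,…,k}. -/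
/-!
Let `s(n)` be the sum of the base-`p` digits of `n`, `p` prime. By Legendre's formula
`(p - 1) · v_p(n!) = n - s(n)`, so `m! n! ∣ (m + n)!` makes `s` subadditive, and `p ∣ n!` gives
`s(n) < n` as soon as `p ≤ n`. Since `s(p^e y) = s(y)`, a sum `∑ 2^i x_i` has binary digit sum at
most `∑ x_i`, strictly less if some `x_i ≥ 2`. As `2^k - 1` has digit sum `k = ∑ x_i`, every `x_i`
is at most `1`, and then `∑ x_i = k` forces `x_i = 1`.
-/

open Finset

namespace Nat

variable {p : ℕ} [Fact p.Prime]

theorem digit_sum_add_le (m n : ℕ) :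
    (p.digits (m + n)).sum ≤ (p.digits m).sum + (p.digits n).sum := by
  have hv : padicValNat p m ! + padicValNat p n ! ≤ padicValNat p (m + n)! := by
    rw [← padicValNat.mul (factorial_ne_zero m) (factorial_ne_zero n),
      ← padicValNat_dvd_iff_le (factorial_ne_zero _)]
    exact pow_padicValNat_dvd.trans (factorial_mul_factorial_dvd_factorial_add m n)
  have hlegendre := Nat.mul_le_mul_left (p - 1) hv
  rw [mul_add, sub_one_mul_padicValNat_factorial, sub_one_mul_padicValNat_factorial,
    sub_one_mul_padicValNat_factorial] at hlegendre
  have := digit_sum_le p m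
  have := digit_sum_le p n
  have := digit_sum_le p (m + n)
  omega

theorem digit_sum_lt_self {n : ℕ} (hn : p ≤ n) : (p.digits n).sum < n := by
  have hp := (Fact.out : p.Prime)
  have hv : 1 ≤ padicValNat p n ! :=
    one_le_padicValNat_of_dvd (factorial_ne_zero n) (dvd_factorial hp.pos hn)
  have hlegendre := Nat.mul_le_mul_left (p - 1) hv
  rw [sub_one_mul_padicValNat_factorial] at hlegendre
  have := hp.two_le
  omega

theorem digit_sum_base_pow_mul {b : ℕ} (hb : 1 < b) (k n : ℕ) :
    (b.digits (b ^ k * n)).sum = (b.digits n).sum := by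
  rcases n.eq_zero_or_pos with rfl | hn
  · simp
  · simp [digits_base_pow_mul hb hn]

theorem digit_sum_base_pow_sub_one {b : ℕ} (hb : 1 < b) (k : ℕ) :
    (b.digits (b ^ k - 1)).sum = k * (b - 1) := by
  induction k with
  | zero => simp
  | succ k ih =>
    have hsplit : b ^ (k + 1) - 1 = (b - 1) + b * (b ^ k - 1) := by
      have : b ≤ b * b ^ k := Nat.le_mul_of_pos_right b (by positivity)
      rw [pow_succ', Nat.mul_sub, mul_one]
      omega
    rw [hsplit, digits_add b hb _ _ (by omega) (by omega), List.sum_cons, ih]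
    ring

variable {ι : Type*} (s : Finset ι) (e y : ι → ℕ)

theorem digit_sum_sum_pow_mul_le :
    (p.digits (∑ i ∈ s, p ^ e i * y i)).sum ≤ ∑ i ∈ s, y i := by
  refine (le_sum_of_subadditive (fun n ↦ (p.digits n).sum) (by simp) digit_sum_add_le s _).trans
    (sum_le_sum fun i _ ↦ ?_)
  rw [digit_sum_base_pow_mul (Fact.out : p.Prime).one_lt]
  exact digit_sum_le p (y i)

theorem digit_sum_sum_pow_mul_lt {j : ι} (hj : j ∈ s) (hyj : p ≤ y j) :
    (p.digits (∑ i ∈ s, p ^ e i * y i)).sum < ∑ i ∈ s, y i := by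
  classical
  rw [← add_sum_erase s _ hj, ← add_sum_erase s y hj]
  calc _ ≤ (p.digits (p ^ e j * y j)).sum + (p.digits (∑ i ∈ s.erase j, p ^ e i * y i)).sum :=
        digit_sum_add_le _ _
    _ < y j + ∑ i ∈ s.erase j, y i := by
        rw [digit_sum_base_pow_mul (Fact.out : p.Prime).one_lt]
        exact add_lt_add_of_lt_of_le (digit_sum_lt_self hyj) (digit_sum_sum_pow_mul_le _ e y)

end Nat

theorem powers_of_two_unique_general (k : ℕ) (x : Fin k → ℤ) (hx : 0 ≤ x)
    (hcard : ∑ i, x i = (k : ℤ))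
    (hval : ∑ i : Fin k, 2 ^ (i : ℕ) * x i = 2 ^ k - 1) :
    ∀ i, x i = 1 := by
  lift x to Fin k → ℕ using hx
  beta_reduce at hcard hval
  replace hcard : ∑ i, x i = k := by exact_mod_cast hcard
  replace hval : ∑ i : Fin k, 2 ^ (i : ℕ) * x i = 2 ^ k - 1 := by
    have : ∑ i : Fin k, 2 ^ (i : ℕ) * x i + 1 = 2 ^ k := by
      rw [← Nat.cast_inj (R := ℤ)]
      push_cast
      linarith
    omega
  have hdigits : (Nat.digits 2 (∑ i : Fin k, 2 ^ (i : ℕ) * x i)).sum = k := by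
    rw [hval, Nat.digit_sum_base_pow_sub_one one_lt_two]
    exact mul_one k
  have hle : ∀ i, x i ≤ 1 := fun i ↦ by
    by_contra! h
    have := Nat.digit_sum_sum_pow_mul_lt (p := 2) univ (fun i : Fin k ↦ (i : ℕ)) x (mem_univ i) h
    omega
  have hone : ∀ i ∈ univ, x i = 1 :=
    (sum_eq_sum_iff_of_le fun i _ ↦ hle i).mp (by simpa using hcard)
  simpa using hone

/-- Uniqueness claim from the SETH lower bound: if `x ∈ ℤ^k_{≥0}` satisfies
`Σᵢ xᵢ = k` and `Σᵢ 2^{i-1}·xᵢ = 2^k − 1`, then `x` is the all-ones vector. -/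
theorem powers_of_two_unique (k : ℕ) (hk : 1 ≤ k) (x : Fin k → ℤ) (hx : 0 ≤ x)
    (hcard : ∑ i, x i = (k : ℤ))
    (hval : ∑ i : Fin k, 2 ^ (i : ℕ) * x i = 2 ^ k - 1) :
    ∀ i, x i = 1 :=
  powers_of_two_unique_general k x hx hcard hval
end
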